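/- arXiv:2101.04492 — 3 statements merged into one kernel-verified Lean document; each statement's English description precedes it below -/
import Mathlib

section
/- Let X ⊆ ⟨ρ⟩ℝⁿ, Y ⊆ ⟨ρ⟩ℝ^d and let f_ε ∈ C^∞(Ω_ε, ℝ^d) be a net of smooth functions that defines a GSF f of type X → Y. Then: (1) for every [x_ε] ∈ X and every multi-index α ∈ ℕⁿ there exists q ∈ ℝ_{>0} such that sup{|∂^α f_ε(y)| : y ∈ ℝⁿ, |y − x_ε| < ρ_ε^q} ≤ ρ_ε^{−q} for ε small; (2) for every α ∈ ℕⁿ the map g : [x_ε] ∈ X ↦ [∂^α f_ε(x_ε)] ∈ ⟨ρ⟩ℝ^d is locally Lipschitz in the sharp topology, i.e. each x ∈ X has a sharp neighborhood U and L ∈ ⟨ρ⟩ℝ with |g(y) − g(z)| ≤ L·|y − z| for all y, z ∈ U ∩ X; (3) consequently f is continuous with respect to the sharp topologies induced on X and Y. -/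
noncomputable section

open Set Filter Topology MeasureTheory

/-- The index set predicate: `ε ∈ (0,1]`. -/
def II (ε : ℝ) : Prop := 0 < ε ∧ ε ≤ 1

/-- A property `P ε` holds "for `ε` small". -/
def EvSmall (P : ℝ → Prop) : Prop :=
  ∃ ε₀ : ℝ, 0 < ε₀ ∧ ε₀ ≤ 1 ∧ ∀ ε : ℝ, 0 < ε → ε ≤ ε₀ → P ε

/-- A gauge: a net `ρ` with values in `(0,1]` tending to `0` as `ε → 0⁺`. -/
structure IsGauge (ρ : ℝ → ℝ) : Prop where
  pos : ∀ ε, II ε → 0 < ρ ε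
  le_one : ∀ ε, II ε → ρ ε ≤ 1
  tendsto_zero : Filter.Tendsto ρ (nhdsWithin 0 (Set.Ioi 0)) (nhds 0)

/-- A `ρ`-moderate net with values in a normed space. -/
def Moderate (ρ : ℝ → ℝ) {E : Type*} [NormedAddCommGroup E] (x : ℝ → E) : Prop :=
  ∃ N : ℕ, EvSmall (fun ε => ‖x ε‖ ≤ ρ ε ^ (-(N : ℤ)))

/-- `ρ`-equivalence of nets. -/
def REquiv (ρ : ℝ → ℝ) {E : Type*} [NormedAddCommGroup E] (x y : ℝ → E) : Prop :=
  ∀ m : ℕ, EvSmall (fun ε => ‖x ε - y ε‖ ≤ ρ ε ^ m)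

/-- The type of `ρ`-moderate nets. -/
abbrev ModNet (ρ : ℝ → ℝ) (E : Type*) [NormedAddCommGroup E] : Type _ :=
  {x : ℝ → E // Moderate ρ x}

/-- The Robinson–Colombeau ring of generalized points `⟨ρ⟩E`. -/
def RC (ρ : ℝ → ℝ) (E : Type*) [NormedAddCommGroup E] : Type _ :=
  Quot (fun x y : ModNet ρ E => REquiv ρ x.1 y.1)

/-- The class `[x_ε]` of a moderate net. -/
def RC.mk {ρ : ℝ → ℝ} {E : Type*} [NormedAddCommGroup E] (x : ModNet ρ E) : RC ρ E :=
  Quot.mk _ x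

theorem moderate_const_zero (ρ : ℝ → ℝ) {E : Type*} [NormedAddCommGroup E] :
    Moderate ρ (fun _ : ℝ => (0 : E)) := by
  refine ⟨0, 1, one_pos, le_rfl, fun ε _ _ => ?_⟩
  simp

/-- The zero generalized point. -/
def RC.zero (ρ : ℝ → ℝ) (E : Type*) [NormedAddCommGroup E] : RC ρ E :=
  RC.mk ⟨fun _ => 0, moderate_const_zero ρ⟩

/-- The order: `x ≤ y` iff there are representatives with `x_ε ≤ y_ε` for all `ε`. -/
def RC.Le {ρ : ℝ → ℝ} (x y : RC ρ ℝ) : Prop :=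
  ∃ a b : ModNet ρ ℝ, RC.mk a = x ∧ RC.mk b = y ∧ ∀ ε, II ε → a.1 ε ≤ b.1 ε

/-- `x` is invertible in the ring `⟨ρ⟩ℝ`. -/
def RC.IsInvertible {ρ : ℝ → ℝ} (x : RC ρ ℝ) : Prop :=
  ∃ a : ModNet ρ ℝ, RC.mk a = x ∧
    ∃ b : ℝ → ℝ, Moderate ρ b ∧ REquiv ρ (fun ε => a.1 ε * b ε) (fun _ => (1 : ℝ))

/-- `r` is a nonnegative invertible generalized number, i.e. `r > 0`. -/
def RC.PosInv {ρ : ℝ → ℝ} (r : RC ρ ℝ) : Prop :=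
  RC.IsInvertible r ∧ RC.Le (RC.zero ρ ℝ) r

/-- Strict order: `x < y` iff some nonnegative invertible `r` satisfies `r ≤ y - x`. -/
def RC.Lt {ρ : ℝ → ℝ} (x y : RC ρ ℝ) : Prop :=
  ∃ r : RC ρ ℝ, RC.PosInv r ∧
    ∃ a b c : ModNet ρ ℝ, RC.mk a = x ∧ RC.mk b = y ∧ RC.mk c = r ∧
      ∀ ε, II ε → c.1 ε ≤ b.1 ε - a.1 ε

/-- `≤` between (the classes of) two scalar nets: `u ≤ v + z` for some negligible `z`. -/
def NetLe (ρ : ℝ → ℝ) (u v : ℝ → ℝ) : Prop :=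
  ∃ z : ℝ → ℝ, REquiv ρ z (fun _ => (0 : ℝ)) ∧ EvSmall (fun ε => u ε ≤ v ε + z ε)

/-- `|y - x| < r` in `⟨ρ⟩E`. -/
def NormLt {ρ : ℝ → ℝ} {E : Type*} [NormedAddCommGroup E]
    (x y : RC ρ E) (r : RC ρ ℝ) : Prop :=
  ∃ s : RC ρ ℝ, RC.PosInv s ∧
    ∃ a b : ModNet ρ E, ∃ c d : ModNet ρ ℝ,
      RC.mk a = x ∧ RC.mk b = y ∧ RC.mk c = r ∧ RC.mk d = s ∧
      ∀ ε, II ε → d.1 ε ≤ c.1 ε - ‖b.1 ε - a.1 ε‖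

/-- The sharp ball `B_r(x)`. -/
def sharpBall {ρ : ℝ → ℝ} {E : Type*} [NormedAddCommGroup E]
    (x : RC ρ E) (r : RC ρ ℝ) : Set (RC ρ E) :=
  {y | NormLt x y r}

/-- The sharp topology, generated by the balls with invertible positive radius. -/
def sharpTopology (ρ : ℝ → ℝ) (E : Type*) [NormedAddCommGroup E] :
    TopologicalSpace (RC ρ E) :=
  TopologicalSpace.generateFrom {S | ∃ x r, RC.PosInv r ∧ S = sharpBall x r}

/-- The internal set `[A_ε]`. -/
def InternalSet (ρ : ℝ → ℝ) {E : Type*} [NormedAddCommGroup E]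
    (A : ℝ → Set E) : Set (RC ρ E) :=
  {x | ∃ a : ModNet ρ E, RC.mk a = x ∧ EvSmall (fun ε => a.1 ε ∈ A ε)}

/-- The strongly internal set `⟨A_ε⟩`. -/
def StrongSet (ρ : ℝ → ℝ) {E : Type*} [NormedAddCommGroup E]
    (A : ℝ → Set E) : Set (RC ρ E) :=
  {x | ∀ a : ModNet ρ E, RC.mk a = x → EvSmall (fun ε => a.1 ε ∈ A ε)}

/-- Euclidean `ℝⁿ`. -/
abbrev RVec (n : ℕ) := EuclideanSpace ℝ (Fin n)

/-- Partial derivative in the `i`-th coordinate direction. -/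
def pderivI {n : ℕ} {F : Type*} [NormedAddCommGroup F] [NormedSpace ℝ F]
    (i : Fin n) (f : RVec n → F) : RVec n → F :=
  fun x => fderiv ℝ f x (EuclideanSpace.single i 1)

/-- The multi-index partial derivative `∂^α`. -/
def pderivM {n : ℕ} {F : Type*} [NormedAddCommGroup F] [NormedSpace ℝ F]
    (α : Fin n → ℕ) (f : RVec n → F) : RVec n → F :=
  (List.finRange n).foldr (fun i g => (pderivI i)^[α i] g) f

/-- A net of smooth functions `f_ε ∈ C^∞(Ω_ε, F)` defining a generalized smooth
function of type `X → Y`. -/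
structure DefinesGSF (ρ : ℝ → ℝ) {n : ℕ} {F : Type*} [NormedAddCommGroup F]
    [NormedSpace ℝ F] (Ω : ℝ → Set (RVec n)) (f : ℝ → RVec n → F)
    (X : Set (RC ρ (RVec n))) (Y : Set (RC ρ F)) : Prop where
  open' : ∀ ε, II ε → IsOpen (Ω ε)
  smooth : ∀ ε, II ε → ContDiffOn ℝ (⊤ : ℕ∞) (f ε) (Ω ε)
  domain : X ⊆ StrongSet ρ Ω
  val_mod : ∀ a : ModNet ρ (RVec n), RC.mk a ∈ X → Moderate ρ (fun ε => f ε (a.1 ε))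
  val_mem : ∀ a : ModNet ρ (RVec n), RC.mk a ∈ X →
    ∀ hm : Moderate ρ (fun ε => f ε (a.1 ε)), RC.mk ⟨_, hm⟩ ∈ Y
  deriv_mod : ∀ a : ModNet ρ (RVec n), RC.mk a ∈ X → ∀ α : Fin n → ℕ,
    Moderate ρ (fun ε => pderivM α (f ε) (a.1 ε))

/-- `f : X → Y` is a generalized smooth function. -/
def IsGSFOn (ρ : ℝ → ℝ) {n : ℕ} {F : Type*} [NormedAddCommGroup F] [NormedSpace ℝ F]
    (f : RC ρ (RVec n) → RC ρ F) (X : Set (RC ρ (RVec n))) (Y : Set (RC ρ F)) : Prop :=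
  ∃ Ω fn, DefinesGSF ρ Ω fn X Y ∧
    ∀ a : ModNet ρ (RVec n), RC.mk a ∈ X →
      ∀ hm : Moderate ρ (fun ε => fn ε (a.1 ε)), f (RC.mk a) = RC.mk ⟨_, hm⟩

/-- One-dimensional version: a net of smooth functions `f_ε ∈ C^∞(Ω_ε, ℝ)`,
`Ω_ε ⊆ ℝ`, defining a generalized smooth function of type `X → Y`. -/
structure DefinesGSF1 (ρ : ℝ → ℝ) (Ω : ℝ → Set ℝ) (f : ℝ → ℝ → ℝ)
    (X Y : Set (RC ρ ℝ)) : Prop where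
  open' : ∀ ε, II ε → IsOpen (Ω ε)
  smooth : ∀ ε, II ε → ContDiffOn ℝ (⊤ : ℕ∞) (f ε) (Ω ε)
  domain : X ⊆ StrongSet ρ Ω
  val_mod : ∀ a : ModNet ρ ℝ, RC.mk a ∈ X → Moderate ρ (fun ε => f ε (a.1 ε))
  val_mem : ∀ a : ModNet ρ ℝ, RC.mk a ∈ X →
    ∀ hm : Moderate ρ (fun ε => f ε (a.1 ε)), RC.mk ⟨_, hm⟩ ∈ Y
  deriv_mod : ∀ a : ModNet ρ ℝ, RC.mk a ∈ X → ∀ k : ℕ,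
    Moderate ρ (fun ε => iteratedDeriv k (f ε) (a.1 ε))

/-- `f : X → Y` (`X, Y ⊆ ⟨ρ⟩ℝ`) is a generalized smooth function. -/
def IsGSFOn1 (ρ : ℝ → ℝ) (f : RC ρ ℝ → RC ρ ℝ) (X Y : Set (RC ρ ℝ)) : Prop :=
  ∃ Ω fn, DefinesGSF1 ρ Ω fn X Y ∧
    ∀ a : ModNet ρ ℝ, RC.mk a ∈ X →
      ∀ hm : Moderate ρ (fun ε => fn ε (a.1 ε)), f (RC.mk a) = RC.mk ⟨_, hm⟩

/-- The interval `[a,b] ⊆ ⟨ρ⟩ℝ`. -/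
def RCIcc {ρ : ℝ → ℝ} (a b : RC ρ ℝ) : Set (RC ρ ℝ) := {x | RC.Le a x ∧ RC.Le x b}

/-- The interval `(a,b) ⊆ ⟨ρ⟩ℝ`. -/
def RCIoo {ρ : ℝ → ℝ} (a b : RC ρ ℝ) : Set (RC ρ ℝ) := {x | RC.Lt a x ∧ RC.Lt x b}

/-- A sharply bounded net of sets. -/
def SharplyBdd (ρ : ℝ → ℝ) {E : Type*} [NormedAddCommGroup E] (A : ℝ → Set E) : Prop :=
  ∃ N : ℕ, EvSmall (fun ε => ∀ y ∈ A ε, ‖y‖ ≤ ρ ε ^ (-(N : ℤ)))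

/-! ### Auxiliary toolbox -/

section Aux
variable {ρ : ℝ → ℝ}

lemma evsmall_and {P Q : ℝ → Prop} (hP : EvSmall P) (hQ : EvSmall Q) :
    EvSmall (fun ε => P ε ∧ Q ε) := by
  obtain ⟨e1, h1, h1', hP⟩ := hP
  obtain ⟨e2, h2, h2', hQ⟩ := hQ
  exact ⟨min e1 e2, lt_min h1 h2, (min_le_left _ _).trans h1', fun ε hε hε' =>
    ⟨hP ε hε (hε'.trans (min_le_left _ _)), hQ ε hε (hε'.trans (min_le_right _ _))⟩⟩

lemma evsmall_mono {P Q : ℝ → Prop} (hP : EvSmall P) (h : ∀ ε, II ε → P ε → Q ε) :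
    EvSmall Q := by
  obtain ⟨e1, h1, h1', hP⟩ := hP
  exact ⟨e1, h1, h1', fun ε hε hε' => h ε ⟨hε, hε'.trans h1'⟩ (hP ε hε hε')⟩

/-- For any `c > 0`, eventually `ρ ε ≤ c`. -/
lemma IsGauge.ev_le (hρ : IsGauge ρ) {c : ℝ} (hc : 0 < c) : EvSmall (fun ε => ρ ε ≤ c) := by
  have h := hρ.tendsto_zero.eventually (eventually_le_nhds (show (0:ℝ) < c from hc))
  rw [Filter.eventually_iff, Metric.mem_nhdsWithin_iff] at h
  obtain ⟨δ, hδ, hsub⟩ := h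
  refine ⟨min (δ/2) 1, by positivity, min_le_right _ _, fun ε hε hε' => ?_⟩
  refine hsub ⟨?_, hε⟩
  rw [Metric.mem_ball, Real.dist_eq, sub_zero, abs_of_pos hε]
  exact lt_of_le_of_lt (hε'.trans (min_le_left _ _)) (by linarith)

lemma IsGauge.ev_half (hρ : IsGauge ρ) : EvSmall (fun ε => ρ ε ≤ 1/2) := hρ.ev_le (by norm_num)

/-- `EvSmall` of `II`-true statements. -/
lemma evsmall_of_II {P : ℝ → Prop} (h : ∀ ε, II ε → P ε) : EvSmall P :=
  ⟨1, one_pos, le_rfl, fun ε hε hε' => h ε ⟨hε, hε'⟩⟩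

lemma pow_le_pow_gauge {r : ℝ} (h0 : 0 < r) (h1 : r ≤ 1) {m k : ℕ} (hmk : m ≤ k) :
    r ^ k ≤ r ^ m :=
  pow_le_pow_of_le_one h0.le h1 hmk

lemma zpow_neg_eq_inv_pow {r : ℝ} (N : ℕ) : r ^ (-(N:ℤ)) = (r ^ N)⁻¹ := by
  rw [zpow_neg, zpow_natCast]

lemma one_le_zpow_neg {r : ℝ} (h0 : 0 < r) (h1 : r ≤ 1) (N : ℕ) : 1 ≤ r ^ (-(N:ℤ)) := by
  rw [zpow_neg_eq_inv_pow]
  exact (one_le_inv₀ (pow_pos h0 N)).mpr (pow_le_one₀ h0.le h1)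

lemma zpow_neg_mono {r : ℝ} (h0 : 0 < r) (h1 : r ≤ 1) {N k : ℕ} (hNk : N ≤ k) :
    r ^ (-(N:ℤ)) ≤ r ^ (-(k:ℤ)) := by
  rw [zpow_neg_eq_inv_pow, zpow_neg_eq_inv_pow]
  exact inv_anti₀ (pow_pos h0 k) (pow_le_pow_gauge h0 h1 hNk)

section EquivLemmas
variable {E : Type*} [NormedAddCommGroup E]

lemma requiv_refl (hρ : IsGauge ρ) (x : ℝ → E) : REquiv ρ x x := fun m =>
  evsmall_of_II fun ε hε => by
    simp only [sub_self, norm_zero]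
    exact pow_nonneg (hρ.pos ε hε).le m

lemma requiv_symm {x y : ℝ → E} (h : REquiv ρ x y) : REquiv ρ y x := fun m =>
  evsmall_mono (h m) fun ε _ h' => by rwa [norm_sub_rev] at h'

lemma requiv_trans (hρ : IsGauge ρ) {x y z : ℝ → E} (h1 : REquiv ρ x y) (h2 : REquiv ρ y z) :
    REquiv ρ x z := by
  intro m
  refine evsmall_mono (evsmall_and (evsmall_and (h1 (m+1)) (h2 (m+1))) hρ.ev_half)
    fun ε hε ⟨⟨e1, e2⟩, ehalf⟩ => ?_
  have hr : 0 < ρ ε := hρ.pos ε hε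
  calc ‖x ε - z ε‖ ≤ ‖x ε - y ε‖ + ‖y ε - z ε‖ := norm_sub_le_norm_sub_add_norm_sub _ _ _
    _ ≤ ρ ε ^ (m+1) + ρ ε ^ (m+1) := add_le_add e1 e2
    _ ≤ ρ ε ^ m := by
        rw [pow_succ]
        nlinarith [pow_pos hr m]

end EquivLemmas
end Aux

section MkLemmas
variable {E : Type*} [NormedAddCommGroup E]

lemma requiv_equivalence (hρ : IsGauge ρ) :
    Equivalence (fun x y : ModNet ρ E => REquiv ρ x.1 y.1) :=
  ⟨fun x => requiv_refl hρ x.1, fun h => requiv_symm h, fun h1 h2 => requiv_trans hρ h1 h2⟩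

lemma mk_eq_mk (hρ : IsGauge ρ) {a b : ModNet ρ E} :
    RC.mk a = RC.mk b ↔ REquiv ρ a.1 b.1 := by
  constructor
  · intro h
    have := Quot.eq.mp h
    exact ((requiv_equivalence (E := E) hρ).eqvGen_iff).mp this
  · exact fun h => Quot.sound h

end MkLemmas

section Diag
variable {E : Type*} [NormedAddCommGroup E]

/-- The diagonal argument: if a quantity is moderate along every representative of `[a]`,
then it is uniformly controlled on a ball of radius `ρ^q` around `a_ε`, for `ε` small. -/
lemma diag_lemma (hρ : IsGauge ρ) (a : ModNet ρ E) (Q : ℕ → ℝ → E → Prop)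
    (Qmono : ∀ N k ε y, N ≤ k → II ε → Q N ε y → Q k ε y)
    (H : ∀ b : ModNet ρ E, REquiv ρ b.1 a.1 → ∃ N : ℕ, EvSmall (fun ε => Q N ε (b.1 ε))) :
    ∃ q : ℕ, 1 ≤ q ∧ EvSmall (fun ε => ∀ y : E, ‖y - a.1 ε‖ < ρ ε ^ q → Q q ε y) := by
  classical
  by_contra hcon
  push_neg at hcon
  have key : ∀ q : ℕ, 1 ≤ q → ∀ e : ℝ, 0 < e → e ≤ 1 →
      ∃ ε, (0 < ε ∧ ε ≤ e) ∧ ∃ y, ‖y - a.1 ε‖ < ρ ε ^ q ∧ ¬ Q q ε y := by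
    intro q hq e he he1
    by_contra hk
    push_neg at hk
    exact hcon q hq ⟨e, he, he1, fun ε hε hε' y hy => hk ε ⟨hε, hε'⟩ y hy⟩
  -- recursively chosen sequence of bad points
  have step : ∀ (k : ℕ) (p : {p : ℝ × E // 0 < p.1 ∧ p.1 ≤ 1}),
      ∃ p' : {p : ℝ × E // 0 < p.1 ∧ p.1 ≤ 1},
        p'.1.1 ≤ p.1.1 / 2 ∧ p'.1.1 ≤ 1 / (k+1 : ℝ) ∧
        ‖p'.1.2 - a.1 p'.1.1‖ < ρ p'.1.1 ^ (k+1) ∧ ¬ Q (k+1) p'.1.1 p'.1.2 := by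
    intro k p
    obtain ⟨hp0, hp1⟩ := p.2
    have he : 0 < min (p.1.1/2) (1/(k+1:ℝ)) := by positivity
    have he1 : min (p.1.1/2) (1/(k+1:ℝ)) ≤ 1 := (min_le_left _ _).trans (by linarith)
    obtain ⟨ε, ⟨hε0, hεe⟩, y, hy1, hy2⟩ := key (k+1) (by omega) _ he he1
    exact ⟨⟨(ε, y), hε0, hεe.trans he1⟩, hεe.trans (min_le_left _ _),
      hεe.trans (min_le_right _ _), hy1, hy2⟩
  choose stepf hstep1 hstep2 hstep3 hstep4 using step
  let S : ℕ → {p : ℝ × E // 0 < p.1 ∧ p.1 ≤ 1} :=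
    fun k => Nat.rec ⟨(1, a.1 1), by norm_num⟩ (fun k ih => stepf k ih) k
  set Ek : ℕ → ℝ := fun k => (S k).1.1 with hEk
  set Yk : ℕ → E := fun k => (S k).1.2 with hYk
  have hpos : ∀ k, 0 < Ek k := fun k => (S k).2.1
  have hle1 : ∀ k, Ek k ≤ 1 := fun k => (S k).2.2
  have hhalf : ∀ k, Ek (k+1) ≤ Ek k / 2 := fun k => hstep1 k (S k)
  have hbound : ∀ k, Ek (k+1) ≤ 1 / (k+1 : ℝ) := fun k => hstep2 k (S k)
  have hwit : ∀ k, ‖Yk (k+1) - a.1 (Ek (k+1))‖ < ρ (Ek (k+1)) ^ (k+1) := fun k => hstep3 k (S k)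
  have hnot : ∀ k, ¬ Q (k+1) (Ek (k+1)) (Yk (k+1)) := fun k => hstep4 k (S k)
  have hanti : StrictAnti Ek :=
    strictAnti_nat_of_succ_lt fun k => lt_of_le_of_lt (hhalf k) (by linarith [hpos k])
  have hwit' : ∀ k, 1 ≤ k → ‖Yk k - a.1 (Ek k)‖ < ρ (Ek k) ^ k := by
    intro k hk
    obtain ⟨k', rfl⟩ : ∃ k', k = k' + 1 := ⟨k - 1, by omega⟩
    exact hwit k'
  have hnot' : ∀ k, 1 ≤ k → ¬ Q k (Ek k) (Yk k) := by
    intro k hk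
    obtain ⟨k', rfl⟩ : ∃ k', k = k' + 1 := ⟨k - 1, by omega⟩
    exact hnot k'
  have hbound' : ∀ k : ℕ, 1 ≤ k → Ek k ≤ 1 / (k : ℝ) := by
    intro k hk
    obtain ⟨k', rfl⟩ : ∃ k', k = k' + 1 := ⟨k - 1, by omega⟩
    have := hbound k'
    push_cast at this ⊢
    linarith
  -- the modified representative
  let bfun : ℝ → E := fun ε =>
    if h : ∃ k, 1 ≤ k ∧ ε = Ek k then Yk h.choose else a.1 ε
  have heval : ∀ k, 1 ≤ k → bfun (Ek k) = Yk k := by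
    intro k hk
    have hex : ∃ j, 1 ≤ j ∧ Ek k = Ek j := ⟨k, hk, rfl⟩
    have : bfun (Ek k) = Yk hex.choose := dif_pos hex
    rw [this, hanti.injective hex.choose_spec.2.symm]
  have hdiff : ∀ m : ℕ, ∀ ε, 0 < ε → ε ≤ Ek m → ε ≤ 1 → ‖bfun ε - a.1 ε‖ ≤ ρ ε ^ m := by
    intro m ε hε hεm hε1
    by_cases h : ∃ k, 1 ≤ k ∧ ε = Ek k
    · obtain ⟨hj1, hj2⟩ := h.choose_spec
      have hmj : m ≤ h.choose := by
        by_contra hmj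
        push_neg at hmj
        have := hanti hmj
        rw [← hj2] at this
        linarith
      have hII : II (Ek h.choose) := ⟨hpos _, hle1 _⟩
      rw [hj2, heval _ hj1]
      exact le_trans (hwit' _ hj1).le
        (pow_le_pow_gauge (hρ.pos _ hII) (hρ.le_one _ hII) hmj)
    · rw [show bfun ε = a.1 ε from dif_neg h]
      simp only [sub_self, norm_zero]
      exact pow_nonneg (hρ.pos ε ⟨hε, hε1⟩).le m
  have hdiff' : ∀ m : ℕ, EvSmall (fun ε => ‖bfun ε - a.1 ε‖ ≤ ρ ε ^ m) := by
    intro m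
    exact ⟨min (Ek m) 1, lt_min (hpos m) one_pos, min_le_right _ _, fun ε hε hε' =>
      hdiff m ε hε (hε'.trans (min_le_left _ _)) (hε'.trans (min_le_right _ _))⟩
  have hequiv : REquiv ρ bfun a.1 := hdiff'
  have hbmod : Moderate ρ bfun := by
    obtain ⟨Na, hNa⟩ := a.2
    refine ⟨Na + 1, evsmall_mono (evsmall_and (evsmall_and hNa (hdiff' 1)) hρ.ev_half)
      fun ε hε ⟨⟨h1, h2⟩, h3⟩ => ?_⟩
    have hr0 : 0 < ρ ε := hρ.pos ε hε
    have hr1 : ρ ε ≤ 1 := hρ.le_one ε hε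
    have e1 : (1:ℝ) ≤ ρ ε ^ (-(Na:ℤ)) := one_le_zpow_neg hr0 hr1 Na
    have e2 : ρ ε ^ (-((Na:ℕ)+1:ℤ)) = ρ ε ^ (-(Na:ℤ)) * (ρ ε)⁻¹ := by
      have h4 : ρ ε ^ ((Na:ℤ)+1) = ρ ε ^ (Na:ℤ) * ρ ε := zpow_add_one₀ hr0.ne' _
      rw [zpow_neg, zpow_neg, h4, mul_inv]
    have e3 : (2:ℝ) ≤ (ρ ε)⁻¹ := by
      rw [le_inv_comm₀ (by norm_num) hr0]
      linarith
    calc ‖bfun ε‖ ≤ ‖a.1 ε‖ + ‖bfun ε - a.1 ε‖ := by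
          have := norm_add_le (a.1 ε) (bfun ε - a.1 ε)
          simpa using this
      _ ≤ ρ ε ^ (-(Na:ℤ)) + ρ ε ^ 1 := add_le_add h1 h2
      _ ≤ ρ ε ^ (-(Na:ℤ)) + ρ ε ^ (-(Na:ℤ)) := by
          refine add_le_add le_rfl ?_
          calc ρ ε ^ 1 ≤ 1 := by simpa using hr1
            _ ≤ _ := e1
      _ ≤ ρ ε ^ (-((Na:ℕ)+1:ℤ)) := by
          rw [e2]
          nlinarith [zpow_pos hr0 (-(Na:ℤ))]
      _ = ρ ε ^ (-((Na+1 : ℕ):ℤ)) := by push_cast; ring_nf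
  obtain ⟨N, e₀, he₀, he₀1, hQ⟩ := H ⟨bfun, hbmod⟩ hequiv
  -- pick a large index k and derive a contradiction
  set k := max (N+1) (Nat.ceil (1/e₀) + 1) with hk
  have hk1 : 1 ≤ k := le_trans (by omega) (le_max_left _ _)
  have hkN : N ≤ k := le_trans (by omega) (le_max_left _ _)
  have hkc : (1/e₀ : ℝ) ≤ k := by
    calc (1/e₀:ℝ) ≤ (Nat.ceil (1/e₀) : ℝ) := Nat.le_ceil _
      _ ≤ k := by exact_mod_cast le_trans (by omega) (le_max_right _ _)
  have hkpos : (0:ℝ) < k := by exact_mod_cast hk1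
  have hEke : Ek k ≤ e₀ := by
    refine (hbound' k hk1).trans ?_
    rw [div_le_iff₀ hkpos]
    rw [div_le_iff₀ he₀] at hkc
    nlinarith
  have hQk : Q N (Ek k) (bfun (Ek k)) := hQ (Ek k) (hpos k) hEke
  rw [heval k hk1] at hQk
  exact hnot' k hk1 (Qmono N k (Ek k) (Yk k) hkN ⟨hpos k, hle1 k⟩ hQk)

end Diag

section PosInvLemmas

lemma pow_le_half_pow {r : ℝ} (h0 : 0 < r) (h2 : r ≤ 1/2) (N j : ℕ) :
    r ^ (N + j) ≤ (1/2)^j * r^N := by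
  calc r ^ (N + j) = r ^ j * r ^ N := by ring
    _ ≤ (1/2)^j * r^N :=
      mul_le_mul_of_nonneg_right (pow_le_pow_left₀ h0.le h2 j) (pow_nonneg h0.le N)

/-- A moderate net eventually bounded below by some `ρ^K` represents a
positive invertible generalized number. -/
lemma posinv_of_net (hρ : IsGauge ρ) (u : ModNet ρ ℝ) (K : ℕ)
    (hlow : EvSmall (fun ε => ρ ε ^ K ≤ u.1 ε)) : RC.PosInv (RC.mk u) := by
  classical
  obtain ⟨e₀, he₀, he₀1, hl⟩ := hlow
  set u' : ℝ → ℝ := fun ε => if 0 < ε ∧ ε ≤ e₀ then u.1 ε else 1 with hu'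
  have hIIr : ∀ ε, 0 < ε → ε ≤ e₀ → II ε := fun ε h h' => ⟨h, h'.trans he₀1⟩
  have hlow' : ∀ ε, 0 < ε → ε ≤ e₀ → 0 < u' ε := by
    intro ε h h'
    rw [hu']
    simp only [if_pos (⟨h, h'⟩ : 0 < ε ∧ ε ≤ e₀)]
    exact lt_of_lt_of_le (pow_pos (hρ.pos ε (hIIr ε h h')) K) (hl ε h h')
  have hpos' : ∀ ε, 0 ≤ u' ε := by
    intro ε
    by_cases h : 0 < ε ∧ ε ≤ e₀
    · exact (hlow' ε h.1 h.2).le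
    · show (0:ℝ) ≤ if 0 < ε ∧ ε ≤ e₀ then u.1 ε else 1
      rw [if_neg h]
      norm_num
  have hreq : REquiv ρ u' u.1 := by
    intro m
    refine ⟨e₀, he₀, he₀1, fun ε hε hε' => ?_⟩
    rw [hu']
    simp only [if_pos (⟨hε, hε'⟩ : 0 < ε ∧ ε ≤ e₀), sub_self, norm_zero]
    exact pow_nonneg (hρ.pos ε (hIIr ε hε hε')).le m
  have hmod' : Moderate ρ u' := by
    obtain ⟨Nu, eu, heu, heu1, hNu⟩ := u.2
    refine ⟨Nu, min e₀ eu, lt_min he₀ heu, (min_le_left _ _).trans he₀1, fun ε hε hε' => ?_⟩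
    rw [hu']
    simp only [if_pos (⟨hε, hε'.trans (min_le_left _ _)⟩ : 0 < ε ∧ ε ≤ e₀)]
    exact hNu ε hε (hε'.trans (min_le_right _ _))
  have hmk : RC.mk (⟨u', hmod'⟩ : ModNet ρ ℝ) = RC.mk u := Quot.sound hreq
  constructor
  · refine ⟨⟨u', hmod'⟩, hmk, fun ε => (u' ε)⁻¹, ?_, ?_⟩
    · refine ⟨K, e₀, he₀, he₀1, fun ε hε hε' => ?_⟩
      show ‖(u' ε)⁻¹‖ ≤ ρ ε ^ (-(K:ℤ))
      have hII := hIIr ε hε hε'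
      have h1 : ρ ε ^ K ≤ u' ε := by
        rw [hu']; simp only [if_pos (⟨hε, hε'⟩ : 0 < ε ∧ ε ≤ e₀)]; exact hl ε hε hε'
      have h2 : 0 < ρ ε ^ K := pow_pos (hρ.pos ε hII) K
      rw [Real.norm_eq_abs, abs_of_nonneg (inv_nonneg.mpr (hpos' ε)), zpow_neg_eq_inv_pow]
      exact inv_anti₀ h2 h1
    · intro m
      refine ⟨e₀, he₀, he₀1, fun ε hε hε' => ?_⟩
      show ‖u' ε * (u' ε)⁻¹ - 1‖ ≤ ρ ε ^ m
      rw [mul_inv_cancel₀ (hlow' ε hε hε').ne']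
      simp only [sub_self, norm_zero]
      exact pow_nonneg (hρ.pos ε (hIIr ε hε hε')).le m
  · exact ⟨⟨fun _ => 0, moderate_const_zero ρ⟩, ⟨u', hmod'⟩, rfl, hmk,
      fun ε _ => hpos' ε⟩

/-- Any representative of a positive invertible number is eventually
bounded below by some `ρ^K`. -/
lemma posinv_lower (hρ : IsGauge ρ) {σ : RC ρ ℝ} (hσ : RC.PosInv σ)
    (d : ModNet ρ ℝ) (hd : RC.mk d = σ) :
    ∃ K : ℕ, EvSmall (fun ε => ρ ε ^ K ≤ d.1 ε) := by
  obtain ⟨⟨a₀, ha₀, b₀, hb₀mod, hb₀inv⟩, z', s', hz', hs', hzs⟩ := hσ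
  obtain ⟨N, hN⟩ := hb₀mod
  have hz0 : REquiv ρ z'.1 (fun _ => (0:ℝ)) := (mk_eq_mk hρ).mp hz'
  have has : REquiv ρ a₀.1 s'.1 := (mk_eq_mk hρ).mp (ha₀.trans hs'.symm)
  have hds : REquiv ρ d.1 s'.1 := (mk_eq_mk hρ).mp (hd.trans hs'.symm)
  refine ⟨N + 3, ?_⟩
  have hev := evsmall_and (evsmall_and (evsmall_and (hb₀inv 1) hN)
    (evsmall_and (hz0 (N+5)) (has (N+5)))) (evsmall_and (hds (N+4)) hρ.ev_half)
  refine evsmall_mono hev fun ε hε ⟨⟨⟨hinv, hbN⟩, hz5, ha5⟩, hd4, hhalf⟩ => ?_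
  have hr0 : 0 < ρ ε := hρ.pos ε hε
  have hr1 : ρ ε ≤ 1 := hρ.le_one ε hε
  have hpN : 0 < ρ ε ^ N := pow_pos hr0 N
  -- |a₀ ε| ≥ ρ^N / 2
  have h1 : (1:ℝ)/2 ≤ |a₀.1 ε * b₀ ε| := by
    have habs : |a₀.1 ε * b₀ ε - 1| ≤ ρ ε := by
      have : ‖a₀.1 ε * b₀ ε - 1‖ ≤ ρ ε ^ 1 := hinv
      rwa [Real.norm_eq_abs, pow_one] at this
    have h2 := abs_sub_abs_le_abs_sub (1:ℝ) (a₀.1 ε * b₀ ε)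
    rw [abs_one, abs_sub_comm] at h2
    linarith
  have hbb : |b₀ ε| ≤ (ρ ε ^ N)⁻¹ := by
    have : ‖b₀ ε‖ ≤ ρ ε ^ (-(N:ℤ)) := hbN
    rwa [Real.norm_eq_abs, zpow_neg_eq_inv_pow] at this
  have ha_low : ρ ε ^ N / 2 ≤ |a₀.1 ε| := by
    rw [abs_mul] at h1
    have t1 : |a₀.1 ε| * |b₀ ε| ≤ |a₀.1 ε| * (ρ ε ^ N)⁻¹ :=
      mul_le_mul_of_nonneg_left hbb (abs_nonneg _)
    have t2 : (1:ℝ)/2 ≤ |a₀.1 ε| * (ρ ε ^ N)⁻¹ := le_trans h1 t1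
    calc ρ ε ^ N / 2 = (1/2) * ρ ε ^ N := by ring
      _ ≤ (|a₀.1 ε| * (ρ ε ^ N)⁻¹) * ρ ε ^ N := mul_le_mul_of_nonneg_right t2 hpN.le
      _ = |a₀.1 ε| := by field_simp
  -- s' is bounded below
  have hz'lb : -(ρ ε ^ (N+5)) ≤ z'.1 ε := by
    have : |z'.1 ε| ≤ ρ ε ^ (N+5) := by simpa [Real.norm_eq_abs] using hz5
    linarith [neg_abs_le (z'.1 ε)]
  have hsz : z'.1 ε ≤ s'.1 ε := hzs ε hε
  have has' : |a₀.1 ε - s'.1 ε| ≤ ρ ε ^ (N+5) := by simpa [Real.norm_eq_abs] using ha5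
  have h5 : ρ ε ^ (N+5) ≤ (1/32) * ρ ε ^ N := by
    have := pow_le_half_pow hr0 hhalf N 5
    norm_num at this ⊢
    linarith
  have hs'abs : ρ ε ^ N / 2 - ρ ε ^ (N+5) ≤ |s'.1 ε| := by
    have := abs_sub_abs_le_abs_sub (a₀.1 ε) (s'.1 ε)
    linarith
  have hs'pos : ρ ε ^ (N+2) ≤ s'.1 ε := by
    have h2' : ρ ε ^ (N+2) ≤ (1/4) * ρ ε ^ N := by
      have := pow_le_half_pow hr0 hhalf N 2
      norm_num at this ⊢
      linarith
    rcases le_or_gt 0 (s'.1 ε) with hcase | hcase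
    · rw [abs_of_nonneg hcase] at hs'abs
      linarith
    · exfalso
      rw [abs_of_neg hcase] at hs'abs
      linarith
  -- conclude for d
  have hd4' : |d.1 ε - s'.1 ε| ≤ ρ ε ^ (N+4) := by simpa [Real.norm_eq_abs] using hd4
  have h4 : ρ ε ^ (N+4) ≤ (1/16) * ρ ε ^ N := by
    have := pow_le_half_pow hr0 hhalf N 4
    norm_num at this ⊢
    linarith
  have hp2 : 0 < ρ ε ^ (N+2) := pow_pos hr0 (N+2)
  have hmul : ρ ε * ρ ε ^ (N+2) ≤ (1/2) * ρ ε ^ (N+2) :=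
    mul_le_mul_of_nonneg_right hhalf hp2.le
  have h3 : ρ ε ^ (N+3) ≤ (1/2) * ρ ε ^ (N+2) := by
    have he : ρ ε ^ (N+3) = ρ ε * ρ ε ^ (N+2) := by ring
    rw [he]
    exact hmul
  have h42 : ρ ε ^ (N+4) ≤ (1/4) * ρ ε ^ (N+2) := by
    have he : ρ ε ^ (N+4) = ρ ε * (ρ ε * ρ ε ^ (N+2)) := by ring
    have t1 : ρ ε * (ρ ε * ρ ε ^ (N+2)) ≤ (1/2) * (ρ ε * ρ ε ^ (N+2)) :=
      mul_le_mul_of_nonneg_right hhalf (by positivity)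
    have t2 : (1/2:ℝ) * (ρ ε * ρ ε ^ (N+2)) ≤ (1/2) * ((1/2) * ρ ε ^ (N+2)) :=
      mul_le_mul_of_nonneg_left hmul (by norm_num)
    rw [he]
    linarith
  linarith [neg_abs_le (d.1 ε - s'.1 ε), abs_le.mp hd4']

end PosInvLemmas

section NormLtLemmas
variable {E : Type*} [NormedAddCommGroup E]

lemma normlt_strong (hρ : IsGauge ρ) {x y : RC ρ E} {r : RC ρ ℝ} (h : NormLt x y r) :
    ∃ (a b : ModNet ρ E) (c : ModNet ρ ℝ) (K : ℕ),
      RC.mk a = x ∧ RC.mk b = y ∧ RC.mk c = r ∧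
      EvSmall (fun ε => ‖b.1 ε - a.1 ε‖ ≤ c.1 ε - ρ ε ^ K) := by
  obtain ⟨s, hs, a, b, c, d, hx, hy, hr, hd, hineq⟩ := h
  obtain ⟨K, hK⟩ := posinv_lower hρ hs d hd
  refine ⟨a, b, c, K, hx, hy, hr, evsmall_mono hK fun ε hε h' => ?_⟩
  have := hineq ε hε
  linarith

/-- Transfer of the ball estimate to arbitrary representatives. -/
lemma normlt_bound (hρ : IsGauge ρ) {x y : RC ρ E} {r : RC ρ ℝ} (h : NormLt x y r)
    (a0 b0 : ModNet ρ E) (c0 : ModNet ρ ℝ)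
    (hx : RC.mk a0 = x) (hy : RC.mk b0 = y) (hr : RC.mk c0 = r) (k : ℕ) :
    EvSmall (fun ε => ‖b0.1 ε - a0.1 ε‖ ≤ c0.1 ε + ρ ε ^ k) := by
  obtain ⟨a, b, c, K, hx', hy', hr', hEv⟩ := normlt_strong hρ h
  have haa : REquiv ρ a0.1 a.1 := (mk_eq_mk hρ).mp (hx.trans hx'.symm)
  have hbb : REquiv ρ b0.1 b.1 := (mk_eq_mk hρ).mp (hy.trans hy'.symm)
  have hcc : REquiv ρ c.1 c0.1 := (mk_eq_mk hρ).mp (hr'.trans hr.symm)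
  have hev := evsmall_and (evsmall_and (evsmall_and (haa (k+2)) (hbb (k+2)))
    (evsmall_and (hcc (k+2)) hEv)) hρ.ev_half
  refine evsmall_mono hev fun ε hε ⟨⟨⟨ha, hb⟩, hc, hE⟩, hhalf⟩ => ?_
  have hr0 : 0 < ρ ε := hρ.pos ε hε
  have htri : ‖b0.1 ε - a0.1 ε‖ ≤ ‖b0.1 ε - b.1 ε‖ + ‖b.1 ε - a.1 ε‖ + ‖a.1 ε - a0.1 ε‖ := by
    have hsum : b0.1 ε - a0.1 ε = (b0.1 ε - b.1 ε) + (b.1 ε - a.1 ε) + (a.1 ε - a0.1 ε) := by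
      abel
    rw [hsum]
    exact norm_add₃_le
  have hc' : c.1 ε ≤ c0.1 ε + ρ ε ^ (k+2) := by
    have := (abs_le.mp (by simpa [Real.norm_eq_abs] using hc)).2
    linarith
  have haa' : ‖a.1 ε - a0.1 ε‖ ≤ ρ ε ^ (k+2) := by
    rw [norm_sub_rev]; exact ha
  have hsmall : (3:ℝ) * ρ ε ^ (k+2) ≤ ρ ε ^ k := by
    have := pow_le_half_pow hr0 hhalf k 2
    have he : k + 2 = k + 2 := rfl
    have h2 : ρ ε ^ (k+2) ≤ (1/4) * ρ ε ^ k := by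
      have hpk := pow_le_half_pow hr0 hhalf k 2
      norm_num at hpk
      linarith
    nlinarith [pow_pos hr0 k]
  have hK0 : (0:ℝ) ≤ ρ ε ^ K := pow_nonneg hr0.le K
  linarith

/-- Construct ball membership from an eventual estimate. -/
lemma normlt_of_ev (hρ : IsGauge ρ) {x y : RC ρ E} {r : RC ρ ℝ}
    (a b : ModNet ρ E) (c : ModNet ρ ℝ)
    (hx : RC.mk a = x) (hy : RC.mk b = y) (hr : RC.mk c = r) (K : ℕ)
    (h : EvSmall (fun ε => ‖b.1 ε - a.1 ε‖ ≤ c.1 ε - ρ ε ^ K)) : NormLt x y r := by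
  classical
  obtain ⟨e₀, he₀, he₀1, hh⟩ := h
  set dfun : ℝ → ℝ := fun ε =>
    if 0 < ε ∧ ε ≤ e₀ then ρ ε ^ K else c.1 ε - ‖b.1 ε - a.1 ε‖ with hdfun
  have hIIr : ∀ ε, 0 < ε → ε ≤ e₀ → II ε := fun ε h h' => ⟨h, h'.trans he₀1⟩
  have hdmod : Moderate ρ dfun := by
    refine ⟨0, e₀, he₀, he₀1, fun ε hε hε' => ?_⟩
    have hII := hIIr ε hε hε'
    have hr0 := hρ.pos ε hII
    show ‖dfun ε‖ ≤ ρ ε ^ (-(0:ℕ):ℤ)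
    rw [hdfun]
    simp only [if_pos (⟨hε, hε'⟩ : 0 < ε ∧ ε ≤ e₀)]
    rw [Real.norm_eq_abs, abs_of_nonneg (pow_nonneg hr0.le K)]
    simp only [Nat.cast_zero, neg_zero, zpow_zero]
    exact pow_le_one₀ hr0.le (hρ.le_one ε hII)
  have hlow : EvSmall (fun ε => ρ ε ^ K ≤ dfun ε) := by
    refine ⟨e₀, he₀, he₀1, fun ε hε hε' => ?_⟩
    rw [hdfun]
    simp only [if_pos (⟨hε, hε'⟩ : 0 < ε ∧ ε ≤ e₀)]
    exact le_rfl
  refine ⟨RC.mk ⟨dfun, hdmod⟩, posinv_of_net hρ ⟨dfun, hdmod⟩ K hlow,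
    a, b, c, ⟨dfun, hdmod⟩, hx, hy, hr, rfl, fun ε hε => ?_⟩
  show dfun ε ≤ c.1 ε - ‖b.1 ε - a.1 ε‖
  rw [hdfun]
  by_cases hcase : 0 < ε ∧ ε ≤ e₀
  · simp only [if_pos hcase]
    have := hh ε hcase.1 hcase.2
    linarith
  · simp only [if_neg hcase]
    exact le_rfl

lemma mem_sharpBall_self (hρ : IsGauge ρ) (a : ModNet ρ E) (c : ModNet ρ ℝ) (K : ℕ)
    (hc : EvSmall (fun ε => ρ ε ^ K ≤ c.1 ε)) :
    RC.mk a ∈ sharpBall (RC.mk a) (RC.mk c) :=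
  normlt_of_ev hρ a a c rfl rfl rfl K
    (evsmall_mono hc fun ε _ h => by
      simp only [sub_self, norm_zero]
      linarith)

end NormLtLemmas

section Eucl
variable {n d : ℕ}

lemma eucl_coord_le_norm (v : RVec n) (i : Fin n) : |v i| ≤ ‖v‖ := by
  rw [EuclideanSpace.norm_eq]
  calc |v i| = Real.sqrt (‖v i‖^2) := by
        rw [Real.sqrt_sq_eq_abs]
        simp [Real.norm_eq_abs, abs_abs]
    _ ≤ Real.sqrt (∑ j, ‖v j‖^2) := by
        apply Real.sqrt_le_sqrt
        exact Finset.single_le_sum (f := fun j => ‖v j‖^2)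
          (fun j _ => sq_nonneg _) (Finset.mem_univ i)

lemma eucl_decomp (v : RVec n) : v = ∑ i, v i • EuclideanSpace.single i (1:ℝ) := by
  ext j
  rw [WithLp.ofLp_sum, Finset.sum_apply]
  simp [EuclideanSpace.single_apply]

lemma opnorm_le_sum (A : RVec n →L[ℝ] RVec d) :
    ‖A‖ ≤ ∑ i, ‖A (EuclideanSpace.single i (1:ℝ))‖ := by
  refine ContinuousLinearMap.opNorm_le_bound _
    (Finset.sum_nonneg fun i _ => norm_nonneg _) fun v => ?_
  have hv : A v = ∑ i, v i • A (EuclideanSpace.single i (1:ℝ)) := by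
    conv_lhs => rw [eucl_decomp v]
    rw [map_sum]
    simp
  rw [hv]
  calc ‖∑ i, v i • A (EuclideanSpace.single i (1:ℝ))‖
      ≤ ∑ i, ‖v i • A (EuclideanSpace.single i (1:ℝ))‖ := norm_sum_le _ _
    _ = ∑ i, |v i| * ‖A (EuclideanSpace.single i (1:ℝ))‖ := by
        simp [norm_smul, Real.norm_eq_abs]
    _ ≤ ∑ i, ‖v‖ * ‖A (EuclideanSpace.single i (1:ℝ))‖ :=
        Finset.sum_le_sum fun i _ =>
          mul_le_mul_of_nonneg_right (eucl_coord_le_norm v i) (norm_nonneg _)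
    _ = (∑ i, ‖A (EuclideanSpace.single i (1:ℝ))‖) * ‖v‖ := by
        rw [← Finset.mul_sum, mul_comm]

end Eucl

section Calculus
variable {n : ℕ} {F : Type*} [NormedAddCommGroup F] [NormedSpace ℝ F] {U : Set (RVec n)}

lemma top_add_one_le : (((⊤ : ℕ∞) : WithTop ℕ∞) + 1 : WithTop ℕ∞) ≤ ((⊤ : ℕ∞) : WithTop ℕ∞) := by
  rw [← WithTop.coe_one, ← WithTop.coe_add, top_add]

lemma contDiffOn_pderivI (hU : IsOpen U) {f : RVec n → F} (hf : ContDiffOn ℝ (⊤ : ℕ∞) f U)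
    (i : Fin n) : ContDiffOn ℝ (⊤ : ℕ∞) (pderivI i f) U :=
  (hf.fderiv_of_isOpen hU top_add_one_le).clm_apply contDiffOn_const

lemma pderivI_congr (hU : IsOpen U) {g₁ g₂ : RVec n → F} (h : Set.EqOn g₁ g₂ U)
    {x : RVec n} (hx : x ∈ U) (i : Fin n) : pderivI i g₁ x = pderivI i g₂ x := by
  unfold pderivI
  rw [Filter.EventuallyEq.fderiv_eq (h.eventuallyEq_of_mem (hU.mem_nhds hx))]

lemma pderivI_iter_congr (hU : IsOpen U) {g₁ g₂ : RVec n → F} (h : Set.EqOn g₁ g₂ U)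
    (i : Fin n) (m : ℕ) : Set.EqOn ((pderivI i)^[m] g₁) ((pderivI i)^[m] g₂) U := by
  induction m with
  | zero => simpa using h
  | succ m ih =>
    intro x hx
    rw [Function.iterate_succ_apply', Function.iterate_succ_apply']
    exact pderivI_congr hU ih hx i

lemma contDiffOn_pderivI_iter (hU : IsOpen U) {f : RVec n → F} (hf : ContDiffOn ℝ (⊤ : ℕ∞) f U)
    (i : Fin n) (m : ℕ) : ContDiffOn ℝ (⊤ : ℕ∞) ((pderivI i)^[m] f) U := by
  induction m with
  | zero => simpa using hf
  | succ m ih =>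
    rw [Function.iterate_succ_apply']
    exact contDiffOn_pderivI hU ih i

lemma pderivI_comm (hU : IsOpen U) {f : RVec n → F} (hf : ContDiffOn ℝ (⊤ : ℕ∞) f U)
    (i j : Fin n) {x : RVec n} (hx : x ∈ U) :
    pderivI i (pderivI j f) x = pderivI j (pderivI i f) x := by
  have hf' : ContDiffOn ℝ (⊤ : ℕ∞) (fderiv ℝ f) U := hf.fderiv_of_isOpen hU top_add_one_le
  have hdf : DifferentiableAt ℝ (fderiv ℝ f) x :=
    (hf'.differentiableOn (by simp)).differentiableAt (hU.mem_nhds hx)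
  have heval : ∀ v w : RVec n,
      fderiv ℝ (fun y => fderiv ℝ f y v) x w = fderiv ℝ (fderiv ℝ f) x w v := by
    intro v w
    have h1 := fderiv_clm_apply (c := fderiv ℝ f) (u := fun _ => v) hdf
      (differentiableAt_const v)
    rw [h1]
    simp
  have hsym : ∀ v w : RVec n,
      fderiv ℝ (fderiv ℝ f) x v w = fderiv ℝ (fderiv ℝ f) x w v := by
    intro v w
    refine second_derivative_symmetric_of_eventually (f := f) ?_ hdf.hasFDerivAt v w
    filter_upwards [hU.mem_nhds hx] with y hy
    exact ((hf.differentiableOn (by simp)).differentiableAt (hU.mem_nhds hy)).hasFDerivAt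
  show fderiv ℝ (pderivI j f) x (EuclideanSpace.single i 1)
      = fderiv ℝ (pderivI i f) x (EuclideanSpace.single j 1)
  unfold pderivI
  rw [heval, heval, hsym]

lemma comm_iterate (hU : IsOpen U) (i j : Fin n) :
    ∀ (m : ℕ) (f : RVec n → F), ContDiffOn ℝ (⊤ : ℕ∞) f U →
      Set.EqOn (pderivI i ((pderivI j)^[m] f)) ((pderivI j)^[m] (pderivI i f)) U := by
  intro m
  induction m with
  | zero => intro f _ x _; simp
  | succ m ih =>
    intro f hf x hx
    have h1 : pderivI i ((pderivI j)^[m+1] f) x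
        = pderivI i ((pderivI j)^[m] (pderivI j f)) x := by
      rw [Function.iterate_succ_apply]
    have h2 : Set.EqOn (pderivI i (pderivI j f)) (pderivI j (pderivI i f)) U :=
      fun y hy => pderivI_comm hU hf i j hy
    rw [h1, ih (pderivI j f) (contDiffOn_pderivI hU hf j) hx,
      pderivI_iter_congr hU h2 j m hx]
    rw [show (pderivI j)^[m] (pderivI j (pderivI i f)) x
        = (pderivI j)^[m+1] (pderivI i f) x from by rw [Function.iterate_succ_apply]]

lemma contDiffOn_foldr (hU : IsOpen U) (α : Fin n → ℕ) :
    ∀ (l : List (Fin n)) (f : RVec n → F), ContDiffOn ℝ (⊤ : ℕ∞) f U →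
      ContDiffOn ℝ (⊤ : ℕ∞) (l.foldr (fun i g => (pderivI i)^[α i] g) f) U := by
  intro l
  induction l with
  | nil => intro f hf; simpa using hf
  | cons j l ih =>
    intro f hf
    exact contDiffOn_pderivI_iter hU (ih f hf) j (α j)

lemma pderiv_foldr_move (hU : IsOpen U) (α : Fin n → ℕ) (i : Fin n) :
    ∀ (l : List (Fin n)) (f : RVec n → F), ContDiffOn ℝ (⊤ : ℕ∞) f U →
      Set.EqOn (pderivI i (l.foldr (fun j g => (pderivI j)^[α j] g) f))
        (l.foldr (fun j g => (pderivI j)^[α j] g) (pderivI i f)) U := by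
  intro l
  induction l with
  | nil => intro f _ x _; rfl
  | cons j l ih =>
    intro f hf x hx
    have hfl : ContDiffOn ℝ (⊤ : ℕ∞) (l.foldr (fun j g => (pderivI j)^[α j] g) f) U :=
      contDiffOn_foldr hU α l f hf
    show pderivI i ((pderivI j)^[α j] (l.foldr (fun j g => (pderivI j)^[α j] g) f)) x
      = (pderivI j)^[α j] (l.foldr (fun j g => (pderivI j)^[α j] g) (pderivI i f)) x
    rw [comm_iterate hU i j (α j) _ hfl hx]
    exact pderivI_iter_congr hU (ih f hf) j (α j) hx

lemma foldr_of_not_mem (α β : Fin n → ℕ) {i : Fin n} (hαβ : ∀ j, j ≠ i → α j = β j) :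
    ∀ (l : List (Fin n)), i ∉ l → ∀ g : RVec n → F,
      l.foldr (fun j h => (pderivI j)^[α j] h) g = l.foldr (fun j h => (pderivI j)^[β j] h) g := by
  intro l
  induction l with
  | nil => intro _ g; rfl
  | cons j l ih =>
    intro hmem g
    have hji : j ≠ i := fun h => hmem (h ▸ (List.mem_cons_self (a := j) (l := l)))
    have hil : i ∉ l := fun h => hmem (List.mem_cons_of_mem j h)
    show (pderivI j)^[α j] (l.foldr _ g) = (pderivI j)^[β j] (l.foldr _ g)
    rw [ih hil g, hαβ j hji]

/-- Differentiating a multi-index derivative once more, on an open set where `f` is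
smooth, gives the multi-index derivative with the index increased. -/
lemma pderivM_succ (hU : IsOpen U) {f : RVec n → F} (hf : ContDiffOn ℝ (⊤ : ℕ∞) f U)
    (α : Fin n → ℕ) (i : Fin n) {x : RVec n} (hx : x ∈ U) :
    pderivI i (pderivM α f) x = pderivM (Function.update α i (α i + 1)) f x := by
  obtain ⟨s, t, hst⟩ := List.append_of_mem (List.mem_finRange i)
  have hnd : (List.finRange n).Nodup := List.nodup_finRange n
  rw [hst] at hnd
  have his : i ∉ s := fun h => (List.disjoint_of_nodup_append hnd) h (List.mem_cons_self (a := i) (l := t))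
  have hit : i ∉ t := by
    have := (List.Nodup.of_append_right hnd)
    exact fun h => (List.nodup_cons.mp this).1 h
  set β := Function.update α i (α i + 1) with hβ
  have hαβ : ∀ j, j ≠ i → α j = β j := fun j hj => by
    rw [hβ, Function.update_of_ne hj]
  have hβi : β i = α i + 1 := by rw [hβ, Function.update_self]
  have hGsm : ContDiffOn ℝ (⊤ : ℕ∞) (t.foldr (fun j g => (pderivI j)^[α j] g) f) U :=
    contDiffOn_foldr hU α t f hf
  have hmid : ContDiffOn ℝ (⊤ : ℕ∞)
      ((pderivI i)^[α i] (t.foldr (fun j g => (pderivI j)^[α j] g) f)) U :=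
    contDiffOn_pderivI_iter hU hGsm i _
  have hMα : pderivM α f = s.foldr (fun j g => (pderivI j)^[α j] g)
      ((pderivI i)^[α i] (t.foldr (fun j g => (pderivI j)^[α j] g) f)) := by
    unfold pderivM
    rw [hst, List.foldr_append]
    rfl
  have hMβ : pderivM β f = s.foldr (fun j g => (pderivI j)^[β j] g)
      ((pderivI i)^[β i] (t.foldr (fun j g => (pderivI j)^[β j] g) f)) := by
    unfold pderivM
    rw [hst, List.foldr_append]
    rfl
  calc pderivI i (pderivM α f) x
      = pderivI i (s.foldr (fun j g => (pderivI j)^[α j] g)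
          ((pderivI i)^[α i] (t.foldr (fun j g => (pderivI j)^[α j] g) f))) x := by
        rw [hMα]
    _ = s.foldr (fun j g => (pderivI j)^[α j] g)
          (pderivI i ((pderivI i)^[α i] (t.foldr (fun j g => (pderivI j)^[α j] g) f))) x :=
        pderiv_foldr_move hU α i s _ hmid hx
    _ = s.foldr (fun j g => (pderivI j)^[α j] g)
          ((pderivI i)^[α i + 1] (t.foldr (fun j g => (pderivI j)^[α j] g) f)) x := by
        have h2 : pderivI i ((pderivI i)^[α i] (t.foldr (fun j g => (pderivI j)^[α j] g) f))
            = (pderivI i)^[α i + 1] (t.foldr (fun j g => (pderivI j)^[α j] g) f) :=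
          (Function.iterate_succ_apply' (pderivI i) (α i) _).symm
        rw [h2]
    _ = s.foldr (fun j g => (pderivI j)^[β j] g)
          ((pderivI i)^[α i + 1] (t.foldr (fun j g => (pderivI j)^[α j] g) f)) x := by
        rw [foldr_of_not_mem α β hαβ s his]
    _ = s.foldr (fun j g => (pderivI j)^[β j] g)
          ((pderivI i)^[β i] (t.foldr (fun j g => (pderivI j)^[β j] g) f)) x := by
        rw [hβi, foldr_of_not_mem β α (fun j hj => (hαβ j hj).symm) t hit f]
    _ = pderivM β f x := by rw [hMβ]

lemma contDiffOn_pderivM (hU : IsOpen U) {f : RVec n → F} (hf : ContDiffOn ℝ (⊤ : ℕ∞) f U)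
    (α : Fin n → ℕ) : ContDiffOn ℝ (⊤ : ℕ∞) (pderivM α f) U :=
  contDiffOn_foldr hU α _ f hf

lemma pderivM_zero (f : RVec n → F) : pderivM (fun _ => 0) f = f := by
  unfold pderivM
  generalize (List.finRange n) = l
  induction l with
  | nil => rfl
  | cons j l ih => simpa using ih

end Calculus

lemma evsmall_fin {ρ : ℝ → ℝ} {k : ℕ} (P : Fin k → ℝ → Prop) (h : ∀ i, EvSmall (P i)) :
    EvSmall (fun ε => ∀ i, P i ε) := by
  induction k with
  | zero => exact evsmall_of_II fun ε _ i => i.elim0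
  | succ k ih =>
    have h1 := ih (fun i => P i.succ) (fun i => h i.succ)
    refine evsmall_mono (evsmall_and (h 0) h1) fun ε hε ⟨h0, hs⟩ i => ?_
    exact Fin.cases h0 (fun j => hs j) i
/-- (1) moderate bounds for all derivatives on `ε`-dependent balls,
(2) local Lipschitz property of every derivative in the sharp topology,
(3) sharp continuity of every GSF (Theorem `thm:GSF-continuity`). -/
theorem stmt_5 {ρ : ℝ → ℝ} (hρ : IsGauge ρ) {n d : ℕ}
    (Ω : ℝ → Set (RVec n)) (fn : ℝ → RVec n → RVec d)
    (X : Set (RC ρ (RVec n))) (Y : Set (RC ρ (RVec d)))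
    (f : RC ρ (RVec n) → RC ρ (RVec d))
    (hdef : DefinesGSF ρ Ω fn X Y)
    (heval : ∀ a : ModNet ρ (RVec n), RC.mk a ∈ X →
      ∀ hm : Moderate ρ (fun ε => fn ε (a.1 ε)), f (RC.mk a) = RC.mk ⟨_, hm⟩) :
    (∀ a : ModNet ρ (RVec n), RC.mk a ∈ X → ∀ α : Fin n → ℕ,
      ∃ q : ℝ, 0 < q ∧ EvSmall (fun ε =>
        ∀ y : RVec n, ‖y - a.1 ε‖ < ρ ε ^ q → ‖pderivM α (fn ε) y‖ ≤ ρ ε ^ (-q))) ∧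
    (∀ α : Fin n → ℕ, ∀ a : ModNet ρ (RVec n), RC.mk a ∈ X →
      ∃ r : RC ρ ℝ, RC.PosInv r ∧ ∃ L : ℝ → ℝ, Moderate ρ L ∧
        ∀ b c : ModNet ρ (RVec n), RC.mk b ∈ X → RC.mk c ∈ X →
          RC.mk b ∈ sharpBall (RC.mk a) r → RC.mk c ∈ sharpBall (RC.mk a) r →
          NetLe ρ (fun ε => ‖pderivM α (fn ε) (b.1 ε) - pderivM α (fn ε) (c.1 ε)‖)
            (fun ε => L ε * ‖b.1 ε - c.1 ε‖)) ∧
    @ContinuousOn _ _ (sharpTopology ρ (RVec n)) (sharpTopology ρ (RVec d)) f X := by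
  classical
  -- PART 1, natural-exponent version
  have part1_nat : ∀ (a : ModNet ρ (RVec n)), RC.mk a ∈ X → ∀ α : Fin n → ℕ,
      ∃ q : ℕ, 1 ≤ q ∧ EvSmall (fun ε =>
        ∀ y : RVec n, ‖y - a.1 ε‖ < ρ ε ^ q →
          ‖pderivM α (fn ε) y‖ ≤ ρ ε ^ (-(q:ℤ))) := by
    intro a ha α
    refine diag_lemma hρ a (fun N ε y => ‖pderivM α (fn ε) y‖ ≤ ρ ε ^ (-(N:ℤ)))
      (fun N k ε y hNk hε h =>
        h.trans (zpow_neg_mono (hρ.pos ε hε) (hρ.le_one ε hε) hNk)) ?_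
    intro b hb
    have hmkb : RC.mk b = RC.mk a := Quot.sound hb
    exact hdef.deriv_mod b (hmkb ▸ ha) α
  have part1 : ∀ a : ModNet ρ (RVec n), RC.mk a ∈ X → ∀ α : Fin n → ℕ,
      ∃ q : ℝ, 0 < q ∧ EvSmall (fun ε =>
        ∀ y : RVec n, ‖y - a.1 ε‖ < ρ ε ^ q → ‖pderivM α (fn ε) y‖ ≤ ρ ε ^ (-q)) := by
    intro a ha α
    obtain ⟨q, hq1, hq⟩ := part1_nat a ha α
    refine ⟨(q:ℝ), by exact_mod_cast hq1, evsmall_mono hq fun ε hε h y hy => ?_⟩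
    have hr0 : (0:ℝ) ≤ ρ ε := (hρ.pos ε hε).le
    have e1 : ρ ε ^ ((q:ℕ):ℝ) = ρ ε ^ (q:ℕ) := Real.rpow_natCast _ _
    have e2 : ρ ε ^ (-((q:ℕ):ℝ)) = ρ ε ^ (-(q:ℤ)) := by
      rw [Real.rpow_neg hr0, e1, zpow_neg_eq_inv_pow]
    rw [e2]
    exact h y (by rwa [e1] at hy)
  -- core Lipschitz estimate with explicit radius representative
  have key : ∀ (α : Fin n → ℕ) (a : ModNet ρ (RVec n)), RC.mk a ∈ X →
      ∃ (mr : ℕ) (c0 : ModNet ρ ℝ), EvSmall (fun ε => ρ ε ^ mr ≤ c0.1 ε) ∧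
        ∃ L : ℝ → ℝ, Moderate ρ L ∧
          ∀ b c : ModNet ρ (RVec n), RC.mk b ∈ X → RC.mk c ∈ X →
            RC.mk b ∈ sharpBall (RC.mk a) (RC.mk c0) →
            RC.mk c ∈ sharpBall (RC.mk a) (RC.mk c0) →
            EvSmall (fun ε =>
              ‖pderivM α (fn ε) (b.1 ε) - pderivM α (fn ε) (c.1 ε)‖
                ≤ L ε * ‖b.1 ε - c.1 ε‖) := by
    intro α a ha
    -- a ball around `a_ε` inside `Ω ε`
    obtain ⟨q₀, hq₀1, hq₀⟩ : ∃ q₀ : ℕ, 1 ≤ q₀ ∧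
        EvSmall (fun ε => ∀ y : RVec n, ‖y - a.1 ε‖ < ρ ε ^ q₀ → y ∈ Ω ε) := by
      refine diag_lemma hρ a (fun _ ε y => y ∈ Ω ε) (fun _ _ _ _ _ _ h => h) ?_
      intro b hb
      have hmkb : RC.mk b = RC.mk a := Quot.sound hb
      exact ⟨0, hdef.domain (hmkb ▸ ha) b rfl⟩
    -- bounds for the first-order derivatives of `pderivM α fn`
    have hDi : ∀ i : Fin n, ∃ qi : ℕ, 1 ≤ qi ∧ EvSmall (fun ε =>
        ∀ y : RVec n, ‖y - a.1 ε‖ < ρ ε ^ qi →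
          ‖pderivI i (pderivM α (fn ε)) y‖ ≤ ρ ε ^ (-(qi:ℤ))) := by
      intro i
      refine diag_lemma hρ a (fun N ε y => ‖pderivI i (pderivM α (fn ε)) y‖ ≤ ρ ε ^ (-(N:ℤ)))
        (fun N k ε y hNk hε h =>
          h.trans (zpow_neg_mono (hρ.pos ε hε) (hρ.le_one ε hε) hNk)) ?_
      intro b hb
      have hmkb : RC.mk b = RC.mk a := Quot.sound hb
      have hbX : RC.mk b ∈ X := hmkb ▸ ha
      obtain ⟨N, hN⟩ := hdef.deriv_mod b hbX (Function.update α i (α i + 1))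
      have hbΩ : EvSmall (fun ε => b.1 ε ∈ Ω ε) := hdef.domain hbX b rfl
      refine ⟨N, evsmall_mono (evsmall_and hN hbΩ) fun ε hε ⟨h1, h2⟩ => ?_⟩
      show ‖pderivI i (pderivM α (fn ε)) (b.1 ε)‖ ≤ ρ ε ^ (-(N:ℤ))
      rw [pderivM_succ (hdef.open' ε hε) (hdef.smooth ε hε) α i h2]
      exact h1
    choose qi hqi1 hqi using hDi
    set m := max q₀ (Finset.univ.sup qi) with hm
    have hq₀m : q₀ ≤ m := le_max_left _ _
    have hqim : ∀ i, qi i ≤ m :=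
      fun i => le_trans (Finset.le_sup (Finset.mem_univ i)) (le_max_right _ _)
    -- the radius representative
    set c0fun : ℝ → ℝ := fun ε => if 0 < ε ∧ ε ≤ 1 then ρ ε ^ (m+2) else 1 with hc0fun
    have hc0mod : Moderate ρ c0fun := by
      refine ⟨0, evsmall_of_II fun ε hε => ?_⟩
      have hr0 := hρ.pos ε hε
      show ‖c0fun ε‖ ≤ ρ ε ^ (-(0:ℕ):ℤ)
      rw [hc0fun]
      simp only [if_pos (show 0 < ε ∧ ε ≤ 1 from hε)]
      rw [Real.norm_eq_abs, abs_of_nonneg (pow_nonneg hr0.le _)]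
      simp only [Nat.cast_zero, neg_zero, zpow_zero]
      exact pow_le_one₀ hr0.le (hρ.le_one ε hε)
    have hc0low : EvSmall (fun ε => ρ ε ^ (m+2) ≤ c0fun ε) := by
      refine evsmall_of_II fun ε hε => ?_
      rw [hc0fun]
      simp only [if_pos (show 0 < ε ∧ ε ≤ 1 from hε)]
      exact le_rfl
    set c0 : ModNet ρ ℝ := ⟨c0fun, hc0mod⟩ with hc0
    -- the Lipschitz constant
    set Lfun : ℝ → ℝ := fun ε => (n:ℝ) * ρ ε ^ (-(m:ℤ)) with hLfun
    have hLmod : Moderate ρ Lfun := by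
      refine ⟨m + n + 1, evsmall_mono hρ.ev_half fun ε hε hhalf => ?_⟩
      have hr0 := hρ.pos ε hε
      have hinv2 : (2:ℝ) ≤ (ρ ε)⁻¹ := by
        rw [le_inv_comm₀ (by norm_num) hr0]
        linarith
      have hn2 : (n:ℝ) ≤ (ρ ε)⁻¹ ^ (n+1) := by
        calc (n:ℝ) ≤ 2 ^ (n+1) := by
              have := Nat.lt_two_pow_self (n := n)
              have h2 : (n:ℝ) < 2 ^ n := by exact_mod_cast this
              have h3 : (2:ℝ) ^ n ≤ 2 ^ (n+1) := by
                have : (2:ℝ) ^ (n+1) = 2 * 2 ^ n := by ring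
                rw [this]
                nlinarith [pow_pos (show (0:ℝ) < 2 by norm_num) n]
              linarith
          _ ≤ (ρ ε)⁻¹ ^ (n+1) := pow_le_pow_left₀ (by norm_num) hinv2 (n+1)
      show ‖(n:ℝ) * ρ ε ^ (-(m:ℤ))‖ ≤ ρ ε ^ (-((m + n + 1 : ℕ):ℤ))
      have hzm : ρ ε ^ (-(m:ℤ)) = (ρ ε ^ m)⁻¹ := zpow_neg_eq_inv_pow m
      have hz : ρ ε ^ (-((m + n + 1 : ℕ):ℤ)) = (ρ ε ^ m)⁻¹ * ((ρ ε)⁻¹) ^ (n+1) := by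
        rw [zpow_neg_eq_inv_pow]
        rw [show m + n + 1 = m + (n+1) by ring, pow_add, mul_inv, inv_pow]
      rw [Real.norm_eq_abs, hzm, hz, abs_of_nonneg (by positivity)]
      have hmpos : (0:ℝ) < (ρ ε ^ m)⁻¹ := by positivity
      calc (n:ℝ) * (ρ ε ^ m)⁻¹ ≤ (ρ ε)⁻¹ ^ (n+1) * (ρ ε ^ m)⁻¹ :=
            mul_le_mul_of_nonneg_right hn2 hmpos.le
        _ = (ρ ε ^ m)⁻¹ * ((ρ ε)⁻¹) ^ (n+1) := by ring
    refine ⟨m + 2, c0, hc0low, Lfun, hLmod, ?_⟩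
    intro b c hbX hcX hbB hcB
    -- eventual bounds from ball membership
    have hb' := normlt_bound hρ hbB a b c0 rfl rfl rfl (m+2)
    have hc' := normlt_bound hρ hcB a c c0 rfl rfl rfl (m+2)
    have hall := evsmall_and (evsmall_and (evsmall_and hb' hc')
      (evsmall_and hq₀ (evsmall_fin (ρ := ρ) _ hqi)))
      (evsmall_and (hρ.ev_le (show (0:ℝ) < 1/4 by norm_num)) hρ.ev_half)
    refine evsmall_mono hall fun ε hε ⟨⟨⟨h1, h2⟩, hΩb, hDb⟩, hquarter, hhalf⟩ => ?_
    have hr0 := hρ.pos ε hε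
    have hr1 := hρ.le_one ε hε
    have hc0eq : c0.1 ε = ρ ε ^ (m+2) := by
      show c0fun ε = ρ ε ^ (m+2)
      rw [hc0fun]
      simp only [if_pos (show 0 < ε ∧ ε ≤ 1 from hε)]
    rw [hc0eq] at h1 h2
    -- both points lie in the ball of radius ρ^(m+1)
    have hsmall : 2 * ρ ε ^ (m+2) < ρ ε ^ (m+1) := by
      have he : ρ ε ^ (m+2) = ρ ε * ρ ε ^ (m+1) := by ring
      have hp1 : 0 < ρ ε ^ (m+1) := pow_pos hr0 _
      rw [he]
      nlinarith
    have hballb : b.1 ε ∈ Metric.ball (a.1 ε) (ρ ε ^ (m+1)) := by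
      rw [Metric.mem_ball, dist_eq_norm]
      calc ‖b.1 ε - a.1 ε‖ ≤ ρ ε ^ (m+2) + ρ ε ^ (m+2) := h1
        _ < ρ ε ^ (m+1) := by linarith
    have hballc : c.1 ε ∈ Metric.ball (a.1 ε) (ρ ε ^ (m+1)) := by
      rw [Metric.mem_ball, dist_eq_norm]
      calc ‖c.1 ε - a.1 ε‖ ≤ ρ ε ^ (m+2) + ρ ε ^ (m+2) := h2
        _ < ρ ε ^ (m+1) := by linarith
    -- the ball is contained in Ω ε and in all derivative-bound regions
    have hball_sub : ∀ y ∈ Metric.ball (a.1 ε) (ρ ε ^ (m+1)), ∀ k : ℕ, k ≤ m →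
        ‖y - a.1 ε‖ < ρ ε ^ k := by
      intro y hy k hk
      rw [Metric.mem_ball, dist_eq_norm] at hy
      calc ‖y - a.1 ε‖ < ρ ε ^ (m+1) := hy
        _ ≤ ρ ε ^ k := pow_le_pow_gauge hr0 hr1 (by omega)
    have hballΩ : Metric.ball (a.1 ε) (ρ ε ^ (m+1)) ⊆ Ω ε := fun y hy =>
      hΩb y (hball_sub y hy q₀ hq₀m)
    -- derivative bound on the ball
    have hfderiv_bd : ∀ y ∈ Metric.ball (a.1 ε) (ρ ε ^ (m+1)),
        ‖fderiv ℝ (pderivM α (fn ε)) y‖ ≤ Lfun ε := by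
      intro y hy
      calc ‖fderiv ℝ (pderivM α (fn ε)) y‖
          ≤ ∑ i, ‖fderiv ℝ (pderivM α (fn ε)) y (EuclideanSpace.single i (1:ℝ))‖ :=
            opnorm_le_sum _
        _ ≤ ∑ _i : Fin n, ρ ε ^ (-(m:ℤ)) := by
            refine Finset.sum_le_sum fun i _ => ?_
            have := hDb i y (hball_sub y hy (qi i) (hqim i))
            exact le_trans this (zpow_neg_mono hr0 hr1 (hqim i))
        _ = Lfun ε := by
            rw [Finset.sum_const, Finset.card_univ, Fintype.card_fin, hLfun]
            simp [nsmul_eq_mul]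
    -- differentiability on the ball
    have hdiffb : ∀ y ∈ Metric.ball (a.1 ε) (ρ ε ^ (m+1)),
        DifferentiableAt ℝ (pderivM α (fn ε)) y := by
      intro y hy
      have hsm := contDiffOn_pderivM (hdef.open' ε hε) (hdef.smooth ε hε) α
      exact (hsm.differentiableOn (by simp)).differentiableAt
        ((hdef.open' ε hε).mem_nhds (hballΩ hy))
    -- mean value inequality
    have := Convex.norm_image_sub_le_of_norm_fderiv_le hdiffb hfderiv_bd
      (convex_ball (a.1 ε) (ρ ε ^ (m+1))) hballc hballb
    exact this
  -- PART 2 packaged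
  have part2 : ∀ α : Fin n → ℕ, ∀ a : ModNet ρ (RVec n), RC.mk a ∈ X →
      ∃ r : RC ρ ℝ, RC.PosInv r ∧ ∃ L : ℝ → ℝ, Moderate ρ L ∧
        ∀ b c : ModNet ρ (RVec n), RC.mk b ∈ X → RC.mk c ∈ X →
          RC.mk b ∈ sharpBall (RC.mk a) r → RC.mk c ∈ sharpBall (RC.mk a) r →
          NetLe ρ (fun ε => ‖pderivM α (fn ε) (b.1 ε) - pderivM α (fn ε) (c.1 ε)‖)
            (fun ε => L ε * ‖b.1 ε - c.1 ε‖) := by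
    intro α a ha
    obtain ⟨mr, c0, hlow, L, hL, hyp⟩ := key α a ha
    refine ⟨RC.mk c0, posinv_of_net hρ c0 mr hlow, L, hL, fun b c hb hc hbB hcB => ?_⟩
    refine ⟨fun _ => 0, requiv_refl hρ _, ?_⟩
    refine evsmall_mono (hyp b c hb hc hbB hcB) fun ε hε h => ?_
    simpa using h
  refine ⟨part1, part2, ?_⟩
  -- PART 3: sharp continuity
  letI : TopologicalSpace (RC ρ (RVec n)) := sharpTopology ρ (RVec n)
  letI : TopologicalSpace (RC ρ (RVec d)) := sharpTopology ρ (RVec d)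
  intro x hx
  show Filter.Tendsto f (@nhdsWithin _ (sharpTopology ρ (RVec n)) x X)
    (@nhds _ (sharpTopology ρ (RVec d)) (f x))
  refine TopologicalSpace.tendsto_nhds_generateFrom_iff.mpr ?_
  rintro S ⟨z, s, hsPos, rfl⟩ hfxS
  obtain ⟨a, ha⟩ := Quot.exists_rep x
  have ha' : RC.mk a = x := ha
  have haX : RC.mk a ∈ X := by rw [ha']; exact hx
  have hmf : Moderate ρ (fun ε => fn ε (a.1 ε)) := hdef.val_mod a haX
  have hfx_mk : f x = RC.mk (⟨fun ε => fn ε (a.1 ε), hmf⟩ : ModNet ρ (RVec d)) := by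
    rw [← ha']
    exact heval a haX hmf
  obtain ⟨z₁, w₁, cs, K, hz₁, hw₁, hcs, hEv⟩ := normlt_strong hρ hfxS
  obtain ⟨mr, c0, hlow, L, ⟨NL, hNL⟩, hyp⟩ := key (fun _ => 0) a haX
  set M := NL + (K + mr + 5) with hM
  set c1fun : ℝ → ℝ := fun ε => if 0 < ε ∧ ε ≤ 1 then ρ ε ^ M else 1 with hc1fun
  have hc1mod : Moderate ρ c1fun := by
    refine ⟨0, evsmall_of_II fun ε hε => ?_⟩
    have hr0 := hρ.pos ε hε
    show ‖c1fun ε‖ ≤ ρ ε ^ (-(0:ℕ):ℤ)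
    rw [hc1fun]
    simp only [if_pos (show 0 < ε ∧ ε ≤ 1 from hε)]
    rw [Real.norm_eq_abs, abs_of_nonneg (pow_nonneg hr0.le _)]
    simp only [Nat.cast_zero, neg_zero, zpow_zero]
    exact pow_le_one₀ hr0.le (hρ.le_one ε hε)
  have hc1low : EvSmall (fun ε => ρ ε ^ M ≤ c1fun ε) := by
    refine evsmall_of_II fun ε hε => ?_
    rw [hc1fun]
    simp only [if_pos (show 0 < ε ∧ ε ≤ 1 from hε)]
    exact le_rfl
  set c1 : ModNet ρ ℝ := ⟨c1fun, hc1mod⟩ with hc1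
  have hc1eqII : ∀ ε, II ε → c1.1 ε = ρ ε ^ M := by
    intro ε hε
    show c1fun ε = _
    rw [hc1fun]
    simp only [if_pos (show 0 < ε ∧ ε ≤ 1 from hε)]
  refine mem_nhdsWithin.mpr ⟨sharpBall x (RC.mk c1),
    TopologicalSpace.isOpen_generateFrom_of_mem
      ⟨x, RC.mk c1, posinv_of_net hρ c1 M hc1low, rfl⟩, ?_, ?_⟩
  · rw [← ha']
    exact mem_sharpBall_self hρ a c1 M hc1low
  · rintro y ⟨hyU, hyX⟩
    obtain ⟨b, hb⟩ := Quot.exists_rep y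
    have hb' : RC.mk b = y := hb
    have hbX : RC.mk b ∈ X := by rw [hb']; exact hyX
    have hmfb : Moderate ρ (fun ε => fn ε (b.1 ε)) := hdef.val_mod b hbX
    have hfy_mk : f y = RC.mk (⟨fun ε => fn ε (b.1 ε), hmfb⟩ : ModNet ρ (RVec d)) := by
      rw [← hb']
      exact heval b hbX hmfb
    have hbU : RC.mk b ∈ sharpBall (RC.mk a) (RC.mk c1) := by
      rw [ha', hb']
      exact hyU
    have hba := normlt_bound hρ hbU a b c1 rfl rfl rfl M
    have hbB : RC.mk b ∈ sharpBall (RC.mk a) (RC.mk c0) := by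
      refine normlt_of_ev hρ a b c0 rfl rfl rfl (mr+1)
        (evsmall_mono (evsmall_and (evsmall_and hba hlow) hρ.ev_half)
          fun ε hε ⟨⟨hba', hlow'⟩, hhalf⟩ => ?_)
      have hr0 := hρ.pos ε hε
      have hr1 := hρ.le_one ε hε
      rw [hc1eqII ε hε] at hba'
      have hMmr : ρ ε ^ M ≤ (1/4) * ρ ε ^ mr := by
        have h1 : ρ ε ^ M ≤ ρ ε ^ (mr + 2) := pow_le_pow_gauge hr0 hr1 (by omega)
        have h2 := pow_le_half_pow hr0 hhalf mr 2
        norm_num at h2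
        linarith
      have hsucc : ρ ε ^ (mr+1) ≤ (1/2) * ρ ε ^ mr := by
        have := pow_le_half_pow hr0 hhalf mr 1
        norm_num at this
        linarith
      linarith
    have haB : RC.mk a ∈ sharpBall (RC.mk a) (RC.mk c0) := mem_sharpBall_self hρ a c0 mr hlow
    have hlip := hyp b a hbX haX hbB haB
    have hwa : REquiv ρ w₁.1 (fun ε => fn ε (a.1 ε)) :=
      (mk_eq_mk hρ).mp (hw₁.trans hfx_mk)
    show f y ∈ sharpBall z s
    rw [hfy_mk]
    refine normlt_of_ev hρ z₁ ⟨fun ε => fn ε (b.1 ε), hmfb⟩ cs hz₁ rfl hcs (K+1) ?_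
    have hall := evsmall_and (evsmall_and (evsmall_and hlip hba)
      (evsmall_and hEv (hwa (K+2)))) (evsmall_and hNL hρ.ev_half)
    refine evsmall_mono hall fun ε hε ⟨⟨⟨hl, hba'⟩, hE, hw2⟩, hNL', hhalf⟩ => ?_
    have hr0 := hρ.pos ε hε
    have hr1 := hρ.le_one ε hε
    rw [hc1eqII ε hε] at hba'
    have hl' : ‖fn ε (b.1 ε) - fn ε (a.1 ε)‖ ≤ L ε * ‖b.1 ε - a.1 ε‖ := by
      have h0 := hl
      rwa [pderivM_zero (fn ε)] at h0
    have hLb : |L ε| ≤ ρ ε ^ (-(NL:ℤ)) := by rwa [Real.norm_eq_abs] at hNL'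
    have hterm : L ε * ‖b.1 ε - a.1 ε‖ ≤ ρ ε ^ (-(NL:ℤ)) * (2 * ρ ε ^ M) := by
      have h1 : L ε * ‖b.1 ε - a.1 ε‖ ≤ |L ε| * ‖b.1 ε - a.1 ε‖ :=
        mul_le_mul_of_nonneg_right (le_abs_self _) (norm_nonneg _)
      have h2 : |L ε| * ‖b.1 ε - a.1 ε‖ ≤ ρ ε ^ (-(NL:ℤ)) * (2 * ρ ε ^ M) := by
        refine mul_le_mul hLb ?_ (norm_nonneg _) ?_
        · linarith
        · rw [zpow_neg_eq_inv_pow]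
          positivity
      linarith
    have hMsplit : ρ ε ^ (-(NL:ℤ)) * (2 * ρ ε ^ M) = 2 * ρ ε ^ (K + mr + 5) := by
      rw [zpow_neg_eq_inv_pow, hM, pow_add]
      field_simp
    have htri : ‖fn ε (b.1 ε) - z₁.1 ε‖ ≤ ‖fn ε (b.1 ε) - fn ε (a.1 ε)‖
        + ‖fn ε (a.1 ε) - w₁.1 ε‖ + ‖w₁.1 ε - z₁.1 ε‖ := by
      have hsum : fn ε (b.1 ε) - z₁.1 ε = (fn ε (b.1 ε) - fn ε (a.1 ε))
          + (fn ε (a.1 ε) - w₁.1 ε) + (w₁.1 ε - z₁.1 ε) := by abel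
      rw [hsum]
      exact norm_add₃_le
    have hw2' : ‖fn ε (a.1 ε) - w₁.1 ε‖ ≤ ρ ε ^ (K+2) := by
      rw [norm_sub_rev]
      exact hw2
    have hs1 : ρ ε ^ (K + mr + 5) ≤ (1/32) * ρ ε ^ K := by
      have h1 : ρ ε ^ (K + mr + 5) ≤ ρ ε ^ (K + 5) := pow_le_pow_gauge hr0 hr1 (by omega)
      have h2 := pow_le_half_pow hr0 hhalf K 5
      norm_num at h2
      linarith
    have hs2 : ρ ε ^ (K+2) ≤ (1/4) * ρ ε ^ K := by
      have := pow_le_half_pow hr0 hhalf K 2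
      norm_num at this
      linarith
    have hs3 : ρ ε ^ (K+1) ≤ (1/2) * ρ ε ^ K := by
      have := pow_le_half_pow hr0 hhalf K 1
      norm_num at this
      linarith
    show ‖fn ε (b.1 ε) - z₁.1 ε‖ ≤ cs.1 ε - ρ ε ^ (K+1)
    have hpK : 0 < ρ ε ^ K := pow_pos hr0 K
    linarith
end
end

section
/- Let X ⊆ ⟨ρ⟩ℝⁿ, Y ⊆ ⟨ρ⟩ℝ^d and let f : X → Y be a GSF. Assume X contains its converging subpoints, and that f(x) = 0 for every near-standard point x ∈ X and for every infinite point x ∈ X. Then f(x) = 0 for all x ∈ X. -/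
noncomputable section

open Set Filter Topology MeasureTheory

/-- `J ⊆ (0,1]` is co-final: `0` is an accumulation point of `J`. -/
def Cofinal (J : Set ℝ) : Prop :=
  J ⊆ Set.Ioc 0 1 ∧ ∀ δ : ℝ, 0 < δ → ∃ ε ∈ J, ε < δ

/-- A property holds for `ε ∈ J` small. -/
def EvSmallOn (J : Set ℝ) (P : ℝ → Prop) : Prop :=
  ∃ ε₀ : ℝ, 0 < ε₀ ∧ ε₀ ≤ 1 ∧ ∀ ε ∈ J, ε ≤ ε₀ → P ε

/-- `ρ`-equivalence of nets restricted to `J`. -/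
def REquivOn (ρ : ℝ → ℝ) (J : Set ℝ) {E : Type*} [NormedAddCommGroup E]
    (x y : ℝ → E) : Prop :=
  ∀ m : ℕ, EvSmallOn J (fun ε => ‖x ε - y ε‖ ≤ ρ ε ^ m)

/-- `x` is a near-standard point: some representative converges as `ε → 0⁺`. -/
def NearStd {ρ : ℝ → ℝ} {n : ℕ} (x : RC ρ (RVec n)) : Prop :=
  ∃ a : ModNet ρ (RVec n), RC.mk a = x ∧
    ∃ l : RVec n, Filter.Tendsto a.1 (nhdsWithin 0 (Set.Ioi 0)) (nhds l)

/-- `x` is an infinite point: `|x_ε| → +∞`. -/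
def InfinitePt {ρ : ℝ → ℝ} {n : ℕ} (x : RC ρ (RVec n)) : Prop :=
  ∃ a : ModNet ρ (RVec n), RC.mk a = x ∧
    Filter.Tendsto (fun ε => ‖a.1 ε‖) (nhdsWithin 0 (Set.Ioi 0)) Filter.atTop

/-- `X` contains its converging subpoints: for all co-final `J` and every
near-standard or infinite `x' ∈ X|_J`, there is `x ∈ X` with `x' ⊆ x` and
`lim_{ε→0, ε∈J} x'_ε = lim_{ε→0} x_ε`. -/
def ContainsConvSubpoints (ρ : ℝ → ℝ) {n : ℕ} (X : Set (RC ρ (RVec n))) : Prop :=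
  ∀ J : Set ℝ, Cofinal J → ∀ x' : ℝ → RVec n,
    (∃ a : ModNet ρ (RVec n), RC.mk a ∈ X ∧ REquivOn ρ J x' a.1) →
    ((∃ l, Filter.Tendsto x' (nhdsWithin 0 J) (nhds l)) ∨
      Filter.Tendsto (fun ε => ‖x' ε‖) (nhdsWithin 0 J) Filter.atTop) →
    ∃ b : ModNet ρ (RVec n), RC.mk b ∈ X ∧ REquivOn ρ J x' b.1 ∧
      (∀ l, Filter.Tendsto x' (nhdsWithin 0 J) (nhds l) →
        Filter.Tendsto b.1 (nhdsWithin 0 (Set.Ioi 0)) (nhds l)) ∧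
      (Filter.Tendsto (fun ε => ‖x' ε‖) (nhdsWithin 0 J) Filter.atTop →
        Filter.Tendsto (fun ε => ‖b.1 ε‖) (nhdsWithin 0 (Set.Ioi 0)) Filter.atTop)

section MyHelpers

variable {ρ : ℝ → ℝ} {E : Type*} [NormedAddCommGroup E]

lemma myEvSmall.and {P Q : ℝ → Prop} (hP : EvSmall P) (hQ : EvSmall Q) :
    EvSmall fun ε => P ε ∧ Q ε := by
  obtain ⟨a, ha0, ha1, hPa⟩ := hP
  obtain ⟨b, hb0, hb1, hQb⟩ := hQ
  exact ⟨min a b, lt_min ha0 hb0, (min_le_left _ _).trans ha1,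
    fun ε h1 h2 => ⟨hPa ε h1 (h2.trans (min_le_left _ _)),
      hQb ε h1 (h2.trans (min_le_right _ _))⟩⟩

lemma myGauge_half (hρ : IsGauge ρ) : EvSmall fun ε => ρ ε ≤ 1/2 := by
  have h : {ε : ℝ | ρ ε < 1/2} ∈ nhdsWithin (0:ℝ) (Set.Ioi 0) :=
    hρ.tendsto_zero (Iio_mem_nhds (by norm_num))
  obtain ⟨δ, hδ, hsub⟩ := Metric.mem_nhdsWithin_iff.1 h
  refine ⟨min (δ/2) 1, lt_min (by linarith) one_pos, min_le_right _ _, fun ε h1 h2 => ?_⟩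
  have : ε ∈ Metric.ball (0:ℝ) δ ∩ Set.Ioi 0 := by
    constructor
    · simp only [Metric.mem_ball, Real.dist_eq, sub_zero]
      rw [abs_of_pos h1]
      have := h2.trans (min_le_left _ _); linarith
    · exact h1
  exact (hsub this).le

lemma myREquiv_refl (hρ : IsGauge ρ) (u : ℝ → E) : REquiv ρ u u := fun m =>
  ⟨1, one_pos, le_rfl, fun ε h1 h2 => by
    simpa using pow_nonneg (hρ.pos ε ⟨h1, h2⟩).le m⟩

lemma myREquiv_symm {u v : ℝ → E} (h : REquiv ρ u v) : REquiv ρ v u := fun m => by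
  obtain ⟨a, h0, h1, hP⟩ := h m
  refine ⟨a, h0, h1, fun ε he1 he2 => ?_⟩
  show ‖v ε - u ε‖ ≤ ρ ε ^ m
  rw [norm_sub_rev]; exact hP ε he1 he2

lemma myREquiv_trans (hρ : IsGauge ρ) {u v w : ℝ → E}
    (h1 : REquiv ρ u v) (h2 : REquiv ρ v w) : REquiv ρ u w := fun m => by
  obtain ⟨a, ha0, ha1, hP⟩ := myEvSmall.and (myEvSmall.and (h1 (m+1)) (h2 (m+1))) (myGauge_half hρ)
  refine ⟨a, ha0, ha1, fun ε he1 he2 => ?_⟩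
  obtain ⟨⟨q1, q2⟩, q3⟩ := hP ε he1 he2
  have hpos : 0 < ρ ε := hρ.pos ε ⟨he1, he2.trans ha1⟩
  have hpm : (0:ℝ) ≤ ρ ε ^ m := pow_nonneg hpos.le m
  have htri : ‖u ε - w ε‖ ≤ ‖u ε - v ε‖ + ‖v ε - w ε‖ := norm_sub_le_norm_sub_add_norm_sub _ _ _
  have hps : ρ ε ^ (m+1) = ρ ε ^ m * ρ ε := pow_succ _ _
  nlinarith

lemma myREquiv_of_mk_eq (hρ : IsGauge ρ) {u v : ModNet ρ E} (h : RC.mk u = RC.mk v) :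
    REquiv ρ u.1 v.1 := by
  have h' : Relation.EqvGen (fun x y : ModNet ρ E => REquiv ρ x.1 y.1) u v :=
    Quot.eqvGen_exact h
  clear h
  induction h' with
  | rel x y hxy => exact hxy
  | refl x => exact myREquiv_refl hρ x.1
  | symm x y _ ih => exact myREquiv_symm ih
  | trans x y z _ _ ih1 ih2 => exact myREquiv_trans hρ ih1 ih2

lemma myTendsto_nhdsWithin_range {α : Type*} {F : Filter α} (e : ℕ → ℝ) (hpos : ∀ k, 0 < e k)
    (hanti : StrictAnti e) (g : ℝ → α) (hg : Filter.Tendsto (fun k => g (e k)) Filter.atTop F) :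
    Filter.Tendsto g (nhdsWithin 0 (Set.range e)) F := by
  rw [Filter.tendsto_def]
  intro U hU
  obtain ⟨K, hK⟩ := (Filter.tendsto_atTop'.1 hg) U hU
  rw [Metric.mem_nhdsWithin_iff]
  refine ⟨e K, hpos K, ?_⟩
  rintro x ⟨hball, k, rfl⟩
  simp only [Metric.mem_ball, Real.dist_eq, sub_zero] at hball
  rw [abs_of_pos (hpos k)] at hball
  have hk : K ≤ k := by
    by_contra hc
    push_neg at hc
    exact absurd hball (not_lt.2 (hanti hc).le)
  exact hK k hk

end MyHelpers

/-- a GSF on a domain containing its converging subpoints which vanishes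
at all near-standard and all infinite points vanishes identically
(Theorem `thm:nearStdInfEquality`). -/
theorem stmt_7 {ρ : ℝ → ℝ} (hρ : IsGauge ρ) {n d : ℕ}
    (X : Set (RC ρ (RVec n))) (Y : Set (RC ρ (RVec d)))
    (f : RC ρ (RVec n) → RC ρ (RVec d))
    (hf : IsGSFOn ρ f X Y)
    (hX : ContainsConvSubpoints ρ X)
    (h0 : ∀ x ∈ X, (NearStd x ∨ InfinitePt x) → f x = RC.zero ρ (RVec d)) :
    ∀ x ∈ X, f x = RC.zero ρ (RVec d) := by
  classical
  obtain ⟨Ω, fn, hD, hval⟩ := hf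
  intro x hx
  obtain ⟨a, rfl⟩ := Quot.exists_rep x
  have hxa : RC.mk a ∈ X := hx
  have hma : Moderate ρ (fun ε => fn ε (a.1 ε)) := hD.val_mod a hxa
  show f (RC.mk a) = RC.zero ρ (RVec d)
  rw [hval a hxa hma]
  by_contra hne
  have hneq : ¬ REquiv ρ (fun ε => fn ε (a.1 ε)) (fun _ => (0 : RVec d)) :=
    fun h => hne (Quot.sound h)
  rw [REquiv] at hneq
  push_neg at hneq
  obtain ⟨m, hm⟩ := hneq
  rw [EvSmall] at hm
  push_neg at hm
  set J : Set ℝ := {ε | 0 < ε ∧ ε ≤ 1 ∧ ρ ε ^ m < ‖fn ε (a.1 ε) - 0‖} with hJdef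
  have hJex : ∀ δ : ℝ, 0 < δ → ∃ ε, ε ∈ J ∧ ε < δ := by
    intro δ hδ
    obtain ⟨ε, hε1, hε2, hε3⟩ := hm (min (δ/2) 1) (lt_min (by linarith) one_pos)
      (min_le_right _ _)
    refine ⟨ε, ⟨hε1, hε2.trans (min_le_right _ _), hε3⟩, ?_⟩
    calc ε ≤ min (δ/2) 1 := hε2
      _ ≤ δ/2 := min_le_left _ _
      _ < δ := by linarith
  choose pick hpickJ hpicklt using hJex
  -- strictly decreasing sequence in J tending to 0
  let eS : ℕ → {p : ℝ // p ∈ J} :=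
    fun k => Nat.rec ⟨pick 1 one_pos, hpickJ 1 one_pos⟩
      (fun k p => ⟨pick (min p.1 (1/((k:ℝ)+2)))
        (lt_min p.2.1 (by positivity)), hpickJ _ _⟩) k
  let e : ℕ → ℝ := fun k => (eS k).1
  have heJ : ∀ k, e k ∈ J := fun k => (eS k).2
  have hepos : ∀ k, 0 < e k := fun k => (heJ k).1
  have hesucc : ∀ k, e (k+1) < min (e k) (1/((k:ℝ)+2)) := fun k => hpicklt _ _
  have heanti : StrictAnti e := strictAnti_nat_of_succ_lt fun k =>
    (hesucc k).trans_le (min_le_left _ _)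
  have hebd : ∀ k, e k ≤ 1/((k:ℝ)+1) := by
    intro k
    cases k with
    | zero => exact le_of_lt (lt_of_lt_of_le (hpicklt 1 one_pos) (by norm_num))
    | succ k => exact ((hesucc k).trans_le (min_le_right _ _)).le.trans (by push_cast; ring_nf; rfl)
  have he0 : Filter.Tendsto e Filter.atTop (nhds 0) :=
    squeeze_zero (fun k => (hepos k).le) hebd tendsto_one_div_add_atTop_nhds_zero_nat
  -- extract subsequence where a.1 ∘ e converges or blows up
  have hdich : ∃ e' : ℕ → ℝ, (∀ k, e' k ∈ J) ∧ StrictAnti e' ∧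
      Filter.Tendsto e' Filter.atTop (nhds 0) ∧
      ((∃ l, Filter.Tendsto (fun k => a.1 (e' k)) Filter.atTop (nhds l)) ∨
        Filter.Tendsto (fun k => ‖a.1 (e' k)‖) Filter.atTop Filter.atTop) := by
    by_cases hbb : ∃ M : ℝ, {k | ‖a.1 (e k)‖ ≤ M}.Infinite
    · obtain ⟨M, hMinf⟩ := hbb
      obtain ⟨φ, hφmono, hφ⟩ := Filter.extraction_of_frequently_atTop
        (Nat.frequently_atTop_iff_infinite.2 hMinf)
      have hcpt : IsCompact (Metric.closedBall (0 : RVec n) M) :=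
        isCompact_closedBall _ _
      have hmem : ∀ k, a.1 (e (φ k)) ∈ Metric.closedBall (0 : RVec n) M := by
        intro k; simpa [Metric.mem_closedBall, dist_eq_norm] using hφ k
      obtain ⟨l, _, ψ, hψmono, hψ⟩ := hcpt.tendsto_subseq hmem
      refine ⟨fun k => e (φ (ψ k)), fun k => heJ _,
        heanti.comp_strictMono (hφmono.comp hψmono), ?_, Or.inl ⟨l, hψ⟩⟩
      exact he0.comp ((hφmono.comp hψmono).tendsto_atTop)
    · push_neg at hbb
      refine ⟨e, heJ, heanti, he0, Or.inr ?_⟩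
      rw [Filter.tendsto_atTop]
      intro M
      have hfin : {k | ‖a.1 (e k)‖ ≤ M}.Finite := hbb M
      have : ∀ᶠ k in Filter.cofinite, ¬ ‖a.1 (e k)‖ ≤ M := by
        rw [Filter.eventually_cofinite]
        simpa using hfin
      rw [Nat.cofinite_eq_atTop] at this
      exact this.mono fun k hk => (not_le.1 hk).le
  obtain ⟨e', he'J, he'anti, he'0, he'dich⟩ := hdich
  set J' : Set ℝ := Set.range e' with hJ'def
  have hJ'cof : Cofinal J' := by
    constructor
    · rintro x ⟨k, rfl⟩; exact ⟨(he'J k).1, (he'J k).2.1⟩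
    · intro δ hδ
      obtain ⟨k, hk⟩ := (he'0.eventually_lt_const hδ).exists
      exact ⟨e' k, Set.mem_range_self k, hk⟩
  have he'pos : ∀ k, 0 < e' k := fun k => (he'J k).1
  have htriv : REquivOn ρ J' a.1 a.1 := by
    intro m'
    refine ⟨1, one_pos, le_rfl, fun ε hε hle => ?_⟩
    have hII : II ε := ⟨(hJ'cof.1 hε).1, (hJ'cof.1 hε).2⟩
    simpa using pow_nonneg (hρ.pos ε hII).le m'
  have hOrIn : (∃ l, Filter.Tendsto a.1 (nhdsWithin 0 J') (nhds l)) ∨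
      Filter.Tendsto (fun ε => ‖a.1 ε‖) (nhdsWithin 0 J') Filter.atTop := by
    rcases he'dich with ⟨l, hl⟩ | hinf
    · exact Or.inl ⟨l, myTendsto_nhdsWithin_range e' he'pos he'anti a.1 hl⟩
    · exact Or.inr (myTendsto_nhdsWithin_range e' he'pos he'anti (fun ε => ‖a.1 ε‖) hinf)
  obtain ⟨b, hbX, hbeq, hb1, hb2⟩ := hX J' hJ'cof a.1 ⟨a, hxa, htriv⟩ hOrIn
  have hfb : f (RC.mk b) = RC.zero ρ (RVec d) := by
    apply h0 _ hbX
    rcases hOrIn with ⟨l, hl⟩ | hinf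
    · exact Or.inl ⟨b, rfl, l, hb1 l hl⟩
    · exact Or.inr ⟨b, rfl, hb2 hinf⟩
  -- mixed representative
  have hmodc : Moderate ρ (fun ε => if ε ∈ J' then a.1 ε else b.1 ε) := by
    obtain ⟨Na, hNa⟩ := a.2
    obtain ⟨Nb, hNb⟩ := b.2
    refine ⟨Na + Nb, ?_⟩
    obtain ⟨ε₀, hε₀0, hε₀1, hP⟩ := myEvSmall.and hNa hNb
    refine ⟨ε₀, hε₀0, hε₀1, fun ε h1 h2 => ?_⟩
    obtain ⟨q1, q2⟩ := hP ε h1 h2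
    show ‖(if ε ∈ J' then a.1 ε else b.1 ε)‖ ≤ ρ ε ^ (-((Na + Nb : ℕ):ℤ))
    have hII : II ε := ⟨h1, h2.trans hε₀1⟩
    have hρpos := hρ.pos ε hII
    have hρle := hρ.le_one ε hII
    have hmono1 : ρ ε ^ (-(Na:ℤ)) ≤ ρ ε ^ (-((Na + Nb : ℕ):ℤ)) :=
      zpow_le_zpow_right_of_le_one₀ hρpos hρle (by push_cast; omega)
    have hmono2 : ρ ε ^ (-(Nb:ℤ)) ≤ ρ ε ^ (-((Na + Nb : ℕ):ℤ)) :=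
      zpow_le_zpow_right_of_le_one₀ hρpos hρle (by push_cast; omega)
    by_cases hεJ : ε ∈ J'
    · rw [if_pos hεJ]; exact q1.trans hmono1
    · rw [if_neg hεJ]; exact q2.trans hmono2
  set c : ModNet ρ (RVec n) := ⟨fun ε => if ε ∈ J' then a.1 ε else b.1 ε, hmodc⟩ with hcdef
  have hcb : RC.mk c = RC.mk b := by
    apply Quot.sound
    intro m'
    obtain ⟨ε₀, hε₀0, hε₀1, hP⟩ := hbeq m'
    refine ⟨min ε₀ 1, lt_min hε₀0 one_pos, min_le_right _ _, fun ε h1 h2 => ?_⟩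
    have hII : II ε := ⟨h1, h2.trans (min_le_right _ _)⟩
    show ‖(if ε ∈ J' then a.1 ε else b.1 ε) - b.1 ε‖ ≤ ρ ε ^ m'
    by_cases hεJ : ε ∈ J'
    · rw [if_pos hεJ]
      exact hP ε hεJ (h2.trans (min_le_left _ _))
    · rw [if_neg hεJ]
      simpa using pow_nonneg (hρ.pos ε hII).le m'
  have hcX : RC.mk c ∈ X := hcb ▸ hbX
  have hmc : Moderate ρ (fun ε => fn ε (c.1 ε)) := hD.val_mod c hcX
  have hfc : RC.mk (⟨fun ε => fn ε (c.1 ε), hmc⟩ : ModNet ρ (RVec d)) = RC.zero ρ (RVec d) := by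
    rw [← hval c hcX hmc, hcb, hfb]
  have hzero : REquiv ρ (fun ε => fn ε (c.1 ε)) (fun _ => (0 : RVec d)) :=
    myREquiv_of_mk_eq hρ hfc
  obtain ⟨ε₀, hε₀0, hε₀1, hP⟩ := hzero m
  obtain ⟨k, hk⟩ := (he'0.eventually_lt_const hε₀0).exists
  have hεJ' : e' k ∈ J' := Set.mem_range_self k
  have hεJ : e' k ∈ J := he'J k
  have hc : c.1 (e' k) = a.1 (e' k) := if_pos hεJ'
  have hsmall : ‖fn (e' k) (c.1 (e' k)) - 0‖ ≤ ρ (e' k) ^ m :=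
    hP (e' k) hεJ.1 hk.le
  rw [hc] at hsmall
  exact absurd hsmall (not_le.2 hεJ.2.2)
end
end

section
/- (Taylor's theorem for GSF) Let f : U → ⟨ρ⟩ℝ be a GSF on a sharply open set U ⊆ ⟨ρ⟩ℝ^d, let a, b ∈ ⟨ρ⟩ℝ^d be such that the segment [a,b] := {a + t(b−a) : t ∈ ⟨ρ⟩ℝ, 0 ≤ t ≤ 1} is contained in U, and set h := b − a. Then for every n ∈ ℕ: (1) there exists ξ ∈ [a,b] such that f(a+h) = Σ_{j=0}^{n} (1/j!)·dʲf(a)·hʲ + (1/(n+1)!)·d^{n+1}f(ξ)·h^{n+1} (Lagrange remainder); (2) f(a+h) = Σ_{j=0}^{n} (1/j!)·dʲf(a)·hʲ + (1/n!)·∫_0^1 (1−t)ⁿ d^{n+1}f(a+th)·h^{n+1} dt (integral remainder). -/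
noncomputable section

open Set Filter Topology MeasureTheory

/-- The segment `[a,b] = {a + t(b-a) : t ∈ ⟨ρ⟩ℝ, 0 ≤ t ≤ 1} ⊆ ⟨ρ⟩ℝ^d`,
for fixed representatives of the endpoints. -/
def RCSegment (ρ : ℝ → ℝ) {d : ℕ} (a b : ℝ → RVec d) : Set (RC ρ (RVec d)) :=
  {s | ∃ t : ℝ → ℝ, (∀ ε, II ε → t ε ∈ Set.Icc (0 : ℝ) 1) ∧
    ∃ hm : Moderate ρ (fun ε => a ε + t ε • (b ε - a ε)), RC.mk ⟨_, hm⟩ = s}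

section TaylorHelpers

open scoped ContDiff

/-- On an open set where `g` is smooth, `iteratedDeriv m g` is differentiable. -/
lemma smoothOn_differentiableAt_iteratedDeriv {g : ℝ → ℝ} {V : Set ℝ} (hV : IsOpen V)
    (hg : ContDiffOn ℝ ∞ g V) {x : ℝ} (hx : x ∈ V) (m : ℕ) :
    DifferentiableAt ℝ (iteratedDeriv m g) x := by
  have h1 : ContDiffAt ℝ (m + 1 : ℕ) g x :=
    (hg.of_le (by exact_mod_cast le_top)).contDiffAt (hV.mem_nhds hx)
  have h2 : ContDiffAt ℝ 1 (iteratedFDeriv ℝ m g) x :=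
    h1.iteratedFDeriv_right (by norm_cast; omega)
  have h3 : DifferentiableAt ℝ (iteratedFDeriv ℝ m g) x := h2.differentiableAt one_ne_zero
  rw [iteratedDeriv_eq_equiv_comp]
  exact ((ContinuousMultilinearMap.piFieldEquiv ℝ (Fin m) ℝ).symm.differentiable.differentiableAt).comp x h3

lemma iteratedDerivWithin_Icc_eq {g : ℝ → ℝ} {V : Set ℝ} (hV : IsOpen V)
    (hg : ContDiffOn ℝ ∞ g V) (hIV : Set.Icc (0:ℝ) 1 ⊆ V) {x : ℝ}
    (hx : x ∈ Set.Icc (0:ℝ) 1) (k : ℕ) :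
    iteratedDerivWithin k g (Set.Icc (0:ℝ) 1) x = iteratedDeriv k g x := by
  have hgk : ContDiffOn ℝ (k : ℕ) g V := hg.of_le (by exact_mod_cast le_top)
  have h1 := (hgk.ftaylorSeriesWithin hV.uniqueDiffOn).mono hIV
  have h2 := h1.eq_iteratedFDerivWithin_of_uniqueDiffOn le_rfl
      (uniqueDiffOn_Icc zero_lt_one) hx
  have h3 : ftaylorSeriesWithin ℝ g V x k = iteratedFDerivWithin ℝ k g V x := rfl
  have h4 := iteratedFDerivWithin_of_isOpen (𝕜 := ℝ) (f := g) k hV (hIV hx)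
  rw [iteratedDerivWithin_eq_iteratedFDerivWithin, iteratedDeriv_eq_iteratedFDeriv, ← h2, h3, h4]

lemma chain_iteratedDeriv {d : ℕ} {F : RVec d → ℝ} {O : Set (RVec d)} (hO : IsOpen O)
    (hF : ContDiffOn ℝ ∞ F O) (c h : RVec d) (k : ℕ) :
    ∀ t : ℝ, c + t • h ∈ O →
      iteratedDeriv k (fun s => F (c + s • h)) t
        = iteratedFDeriv ℝ k F (c + t • h) (fun _ => h) := by
  induction k with
  | zero =>
    intro t ht
    simp [iteratedDeriv_zero, iteratedFDeriv_zero_apply]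
  | succ k IH =>
    intro t ht
    rw [iteratedDeriv_succ]
    have hV : IsOpen {s : ℝ | c + s • h ∈ O} :=
      hO.preimage (continuous_const.add (continuous_id.smul continuous_const))
    have h1 : deriv (iteratedDeriv k fun s => F (c + s • h)) t
        = deriv (fun s => iteratedFDeriv ℝ k F (c + s • h) (fun _ => h)) t := by
      apply Filter.EventuallyEq.deriv_eq
      filter_upwards [hV.mem_nhds ht] with s hs
      exact IH s hs
    rw [h1]
    have hd : HasDerivAt (fun s : ℝ => c + s • h) h t := by
      simpa using ((hasDerivAt_id t).smul_const h).const_add c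
    have hFat : ContDiffAt ℝ (k + 1 : ℕ) F (c + t • h) :=
      (hF.of_le (by exact_mod_cast le_top)).contDiffAt (hO.mem_nhds ht)
    have hdiff : DifferentiableAt ℝ (iteratedFDeriv ℝ k F) (c + t • h) :=
      (hFat.iteratedFDeriv_right (m := 1) (by norm_cast; omega)).differentiableAt one_ne_zero
    have hcomp : HasDerivAt (fun s => iteratedFDeriv ℝ k F (c + s • h))
        (fderiv ℝ (iteratedFDeriv ℝ k F) (c + t • h) h) t :=
      hdiff.hasFDerivAt.comp_hasDerivAt t hd
    have happ := (ContinuousMultilinearMap.apply ℝ (fun _ : Fin k => RVec d) ℝ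
      (fun _ => h)).hasFDerivAt.comp_hasDerivAt t hcomp
    have happ' : HasDerivAt (fun s => iteratedFDeriv ℝ k F (c + s • h) (fun _ => h))
        ((fderiv ℝ (iteratedFDeriv ℝ k F) (c + t • h) ((fun _ : Fin (k+1) => h) 0))
          (Fin.tail (fun _ : Fin (k+1) => h))) t := happ
    rw [iteratedFDeriv_succ_apply_left]
    exact happ'.deriv

lemma taylor1d_lagrange {g : ℝ → ℝ} {V : Set ℝ} (hV : IsOpen V)
    (hg : ContDiffOn ℝ ∞ g V) (hIV : Set.Icc (0:ℝ) 1 ⊆ V) (n : ℕ) :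
    ∃ τ ∈ Set.Icc (0:ℝ) 1,
      g 1 = (∑ j ∈ Finset.range (n+1), ((j.factorial : ℝ))⁻¹ * iteratedDeriv j g 0)
        + (((n+1).factorial : ℝ))⁻¹ * iteratedDeriv (n+1) g τ := by
  have hfc : ContDiffOn ℝ n g (Set.Icc 0 1) := (hg.mono hIV).of_le (by exact_mod_cast le_top)
  have hf' : DifferentiableOn ℝ (iteratedDerivWithin n g (Set.Icc (0:ℝ) 1)) (Set.Ioo 0 1) := by
    intro t ht
    have h1 : DifferentiableAt ℝ (iteratedDeriv n g) t :=
      smoothOn_differentiableAt_iteratedDeriv hV hg (hIV (Set.mem_Icc_of_Ioo ht)) n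
    refine (h1.differentiableWithinAt).congr ?_ ?_
    · exact fun y hy => iteratedDerivWithin_Icc_eq hV hg hIV (Set.mem_Icc_of_Ioo hy) n
    · exact iteratedDerivWithin_Icc_eq hV hg hIV (Set.mem_Icc_of_Ioo ht) n
  obtain ⟨τ, hτ, heq⟩ := taylor_mean_remainder_lagrange (f := g) (n := n) zero_ne_one
    (by rwa [Set.uIcc_of_le zero_le_one]) (by rwa [Set.uIcc_of_le zero_le_one, Set.uIoo_of_le zero_le_one])
  rw [Set.uIoo_of_le zero_le_one] at hτ
  rw [Set.uIcc_of_le zero_le_one] at heq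
  refine ⟨τ, Set.mem_Icc_of_Ioo hτ, ?_⟩
  rw [taylor_within_apply] at heq
  have hsum : (∑ j ∈ Finset.range (n+1), ((j.factorial : ℝ)⁻¹ * (1 - 0)^j) •
      iteratedDerivWithin j g (Set.Icc (0:ℝ) 1) 0)
      = ∑ j ∈ Finset.range (n+1), ((j.factorial : ℝ))⁻¹ * iteratedDeriv j g 0 := by
    refine Finset.sum_congr rfl fun j hj => ?_
    rw [iteratedDerivWithin_Icc_eq hV hg hIV (Set.mem_Icc.2 ⟨le_rfl, zero_le_one⟩) j]
    simp [smul_eq_mul]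
  rw [hsum, iteratedDerivWithin_Icc_eq hV hg hIV (Set.mem_Icc_of_Ioo hτ) (n+1)] at heq
  have hfacne : ((n+1).factorial : ℝ) ≠ 0 := Nat.cast_ne_zero.2 (Nat.factorial_ne_zero _)
  field_simp at heq ⊢
  rw [sub_zero, one_pow, mul_one] at heq
  linarith [heq]

lemma taylor1d_integral {g : ℝ → ℝ} {V : Set ℝ} (hV : IsOpen V)
    (hg : ContDiffOn ℝ ∞ g V) (hIV : Set.Icc (0:ℝ) 1 ⊆ V) (n : ℕ) :
    g 1 = (∑ j ∈ Finset.range (n+1), ((j.factorial : ℝ))⁻¹ * iteratedDeriv j g 0)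
      + ((n.factorial : ℝ))⁻¹ * ∫ t in (0:ℝ)..1, (1-t)^n * iteratedDeriv (n+1) g t := by
  have hcont : ∀ m : ℕ, ContinuousOn (iteratedDeriv m g) V := fun m x hx =>
    ((smoothOn_differentiableAt_iteratedDeriv hV hg hx m).continuousAt).continuousWithinAt
  have huIcc : Set.uIcc (0:ℝ) 1 = Set.Icc (0:ℝ) 1 := Set.uIcc_of_le zero_le_one
  have hint : ∀ m k : ℕ, IntervalIntegrable (fun t => (1-t)^k * iteratedDeriv m g t)
      MeasureTheory.volume 0 1 := by
    intro m k
    apply ContinuousOn.intervalIntegrable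
    rw [huIcc]
    exact ((continuousOn_const.sub continuousOn_id).pow k).mul ((hcont m).mono hIV)
  induction n with
  | zero =>
    have hFTC : ∫ t in (0:ℝ)..1, deriv g t = g 1 - g 0 := by
      apply intervalIntegral.integral_deriv_eq_sub
      · intro x hx
        have := smoothOn_differentiableAt_iteratedDeriv hV hg (hIV (huIcc ▸ hx)) 0
        rwa [iteratedDeriv_zero] at this
      · have := hint 1 0
        simpa [iteratedDeriv_one] using this
    have h2 : (∫ t in (0:ℝ)..1, (1-t)^0 * iteratedDeriv (0+1) g t) = g 1 - g 0 := by
      rw [← hFTC]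
      apply intervalIntegral.integral_congr
      intro t ht
      simp [iteratedDeriv_one]
    rw [h2]
    simp [Finset.sum_range_one, iteratedDeriv_zero]
  | succ n IH =>
    set A := iteratedDeriv (n+1) g with hA
    set B := iteratedDeriv (n+2) g with hB
    have hder : ∀ t ∈ Set.uIcc (0:ℝ) 1,
        HasDerivAt (fun s => (1-s)^(n+1) * A s)
          ((1-t)^(n+1) * B t - ((n+1):ℝ) * ((1-t)^n * A t)) t := by
      intro t ht
      have htV : t ∈ V := hIV (huIcc ▸ ht)
      have h0 : HasDerivAt (fun s : ℝ => 1 - s) (-1) t := by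
        simpa using (hasDerivAt_id' t).const_sub (1:ℝ)
      have hp : HasDerivAt (fun x : ℝ => x^(n+1)) (((n+1):ℝ) * (1-t)^n) (1-t) := by
        simpa using hasDerivAt_pow (n+1) (1-t)
      have h1 : HasDerivAt (fun s : ℝ => (1-s)^(n+1)) ((((n+1):ℝ) * (1-t)^n) * (-1)) t :=
        hp.comp t h0
      rw [mul_neg_one] at h1
      have hdA : DifferentiableAt ℝ A t :=
        smoothOn_differentiableAt_iteratedDeriv hV hg htV (n+1)
      have h2 : HasDerivAt A (B t) t := by
        have := hdA.hasDerivAt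
        rwa [show deriv A t = B t by rw [hA, hB, ← iteratedDeriv_succ]] at this
      have := h1.fun_mul h2
      refine this.congr_deriv ?_
      ring
    have key : (∫ t in (0:ℝ)..1, ((1-t)^(n+1) * B t - ((n+1):ℝ) * ((1-t)^n * A t)))
        = (1-1)^(n+1) * A 1 - (1-0)^(n+1) * A 0 := by
      apply intervalIntegral.integral_eq_sub_of_hasDerivAt hder
      have := (hint (n+2) (n+1)).sub ((hint (n+1) n).const_mul ((n+1):ℝ))
      simpa using this
    rw [intervalIntegral.integral_sub (hint (n+2) (n+1))
      ((hint (n+1) n).const_mul ((n+1):ℝ)), intervalIntegral.integral_const_mul] at key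
    rw [Finset.sum_range_succ, IH]
    set I1 := ∫ t in (0:ℝ)..1, (1-t)^n * A t
    set I2 := ∫ t in (0:ℝ)..1, (1-t)^(n+1) * B t
    have hkey : I2 - ((n+1):ℝ) * I1 = - A 0 := by
      rw [key]; ring
    have hfac : (((n+1)).factorial : ℝ) = ((n+1):ℝ) * (n.factorial : ℝ) := by
      rw [Nat.factorial_succ]; push_cast; ring
    have hne : (n.factorial : ℝ) ≠ 0 := Nat.cast_ne_zero.2 (Nat.factorial_ne_zero _)
    have hne1 : ((n+1):ℝ) ≠ 0 := by positivity
    have : ((n.factorial:ℝ))⁻¹ * I1 = (((n+1).factorial : ℝ))⁻¹ * A 0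
        + (((n+1).factorial : ℝ))⁻¹ * I2 := by
      have hI2 : I2 = ((n+1):ℝ) * I1 - A 0 := by linarith [hkey]
      rw [hfac, hI2]
      field_simp
      ring
    rw [this]
    have : iteratedDeriv (n+1) g 0 = A 0 := rfl
    rw [this]
    ring

lemma taylor_eps {d : ℕ} {F : RVec d → ℝ} {O : Set (RVec d)} (hO : IsOpen O)
    (hF : ContDiffOn ℝ ∞ F O) {c h : RVec d}
    (hseg : ∀ s ∈ Set.Icc (0:ℝ) 1, c + s • h ∈ O) (n : ℕ) :
    (∃ τ ∈ Set.Icc (0:ℝ) 1,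
      F (c + h) = (∑ j ∈ Finset.range (n+1), ((j.factorial : ℝ))⁻¹ *
          iteratedFDeriv ℝ j F c (fun _ => h))
        + (((n+1).factorial : ℝ))⁻¹ * iteratedFDeriv ℝ (n+1) F (c + τ • h) (fun _ => h)) ∧
    F (c + h) = (∑ j ∈ Finset.range (n+1), ((j.factorial : ℝ))⁻¹ *
        iteratedFDeriv ℝ j F c (fun _ => h))
      + ((n.factorial : ℝ))⁻¹ * ∫ t in (0:ℝ)..1, (1-t)^n *
          iteratedFDeriv ℝ (n+1) F (c + t • h) (fun _ => h) := by
  have hV : IsOpen {s : ℝ | c + s • h ∈ O} :=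
    hO.preimage (continuous_const.add (continuous_id.smul continuous_const))
  have hIV : Set.Icc (0:ℝ) 1 ⊆ {s : ℝ | c + s • h ∈ O} := fun s hs => hseg s hs
  have hLs : ContDiff ℝ ∞ (fun s : ℝ => c + s • h) :=
    contDiff_const.add (contDiff_id.smul contDiff_const)
  have hg : ContDiffOn ℝ ∞ (fun s : ℝ => F (c + s • h)) {s : ℝ | c + s • h ∈ O} :=
    hF.comp hLs.contDiffOn (fun s hs => hs)
  have hchain : ∀ k : ℕ, ∀ t ∈ Set.Icc (0:ℝ) 1,
      iteratedDeriv k (fun s => F (c + s • h)) t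
        = iteratedFDeriv ℝ k F (c + t • h) (fun _ => h) :=
    fun k t ht => chain_iteratedDeriv hO hF c h k t (hseg t ht)
  have h0mem : (0:ℝ) ∈ Set.Icc (0:ℝ) 1 := Set.mem_Icc.2 ⟨le_rfl, zero_le_one⟩
  have h1mem : (1:ℝ) ∈ Set.Icc (0:ℝ) 1 := Set.mem_Icc.2 ⟨zero_le_one, le_rfl⟩
  have hc0 : c + (0:ℝ) • h = c := by simp
  have hc1 : c + (1:ℝ) • h = c + h := by simp
  have hval1 : (fun s : ℝ => F (c + s • h)) 1 = F (c + h) := by norm_num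
  have hsum : (∑ j ∈ Finset.range (n+1), ((j.factorial : ℝ))⁻¹ *
      iteratedDeriv j (fun s : ℝ => F (c + s • h)) 0)
      = ∑ j ∈ Finset.range (n+1), ((j.factorial : ℝ))⁻¹ * iteratedFDeriv ℝ j F c (fun _ => h) := by
    refine Finset.sum_congr rfl fun j hj => ?_
    rw [hchain j 0 h0mem, hc0]
  constructor
  · obtain ⟨τ, hτ, heq⟩ := taylor1d_lagrange hV hg hIV n
    refine ⟨τ, hτ, ?_⟩
    rw [hc1, hsum, hchain (n+1) τ hτ] at heq
    exact heq
  · have heq := taylor1d_integral hV hg hIV n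
    rw [hc1, hsum] at heq
    rw [heq]
    congr 1
    congr 1
    apply intervalIntegral.integral_congr
    intro t ht
    rw [Set.uIcc_of_le zero_le_one] at ht
    simp only []
    rw [hchain (n+1) t ht]

lemma moderate_segment {ρ : ℝ → ℝ} (hρ : IsGauge ρ) {d : ℕ} (arep brep : ModNet ρ (RVec d))
    (t : ℝ → ℝ) (ht : ∀ ε, II ε → t ε ∈ Set.Icc (0:ℝ) 1) :
    Moderate ρ (fun ε => arep.1 ε + t ε • (brep.1 ε - arep.1 ε)) := by
  obtain ⟨Na, εa, hεa0, hεa1, ha⟩ := arep.2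
  obtain ⟨Nb, εb, hεb0, hεb1, hb⟩ := brep.2
  refine ⟨max Na Nb, min εa εb, lt_min hεa0 hεb0,
    le_trans (min_le_left _ _) hεa1, fun ε hε0 hεle => ?_⟩
  have hεa' : ε ≤ εa := le_trans hεle (min_le_left _ _)
  have hεb' : ε ≤ εb := le_trans hεle (min_le_right _ _)
  have hII : II ε := ⟨hε0, le_trans hεa' hεa1⟩
  have hρ0 : 0 < ρ ε := hρ.pos ε hII
  have hρ1 : ρ ε ≤ 1 := hρ.le_one ε hII
  have hA : ‖arep.1 ε‖ ≤ ρ ε ^ (-(max Na Nb : ℕ) : ℤ) :=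
    le_trans (ha ε hε0 hεa') (zpow_le_zpow_right_of_le_one₀ hρ0 hρ1
      (neg_le_neg (by exact_mod_cast Nat.le_max_left Na Nb)))
  have hB : ‖brep.1 ε‖ ≤ ρ ε ^ (-(max Na Nb : ℕ) : ℤ) :=
    le_trans (hb ε hε0 hεb') (zpow_le_zpow_right_of_le_one₀ hρ0 hρ1
      (neg_le_neg (by exact_mod_cast Nat.le_max_right Na Nb)))
  obtain ⟨ht0, ht1⟩ := ht ε hII
  have hrw : arep.1 ε + t ε • (brep.1 ε - arep.1 ε)
      = (1 - t ε) • arep.1 ε + t ε • brep.1 ε := by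
    rw [smul_sub, sub_smul, one_smul]; abel
  calc ‖arep.1 ε + t ε • (brep.1 ε - arep.1 ε)‖
      = ‖(1 - t ε) • arep.1 ε + t ε • brep.1 ε‖ := by rw [hrw]
    _ ≤ ‖(1 - t ε) • arep.1 ε‖ + ‖t ε • brep.1 ε‖ := norm_add_le _ _
    _ = (1 - t ε) * ‖arep.1 ε‖ + t ε * ‖brep.1 ε‖ := by
        rw [norm_smul, norm_smul, Real.norm_of_nonneg (by linarith), Real.norm_of_nonneg ht0]
    _ ≤ ρ ε ^ (-(max Na Nb : ℕ) : ℤ) := by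
        nlinarith [norm_nonneg (arep.1 ε), norm_nonneg (brep.1 ε), hA, hB]

end TaylorHelpers

/-- Taylor's theorem for GSF with Lagrange and integral remainders
(Theorem `thm:Taylor` (i),(ii)), where `dʲf(x)·hʲ` is the `j`-th differential
applied to `(h,…,h)` and `h := b - a`. -/
theorem stmt_18 {ρ : ℝ → ℝ} (hρ : IsGauge ρ) {d : ℕ}
    (U : Set (RC ρ (RVec d))) (hU : @IsOpen _ (sharpTopology ρ (RVec d)) U)
    (Ω : ℝ → Set (RVec d)) (fn : ℝ → RVec d → ℝ)
    (hdef : DefinesGSF ρ Ω fn U Set.univ)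
    (f : RC ρ (RVec d) → RC ρ ℝ)
    (heval : ∀ a : ModNet ρ (RVec d), RC.mk a ∈ U →
      ∀ hm : Moderate ρ (fun ε => fn ε (a.1 ε)), f (RC.mk a) = RC.mk ⟨_, hm⟩)
    (arep brep : ModNet ρ (RVec d))
    (hseg : RCSegment ρ arep.1 brep.1 ⊆ U) (n : ℕ) :
    (∃ ξ : ℝ → RVec d, ∃ hmξ : Moderate ρ ξ,
      RC.mk ⟨ξ, hmξ⟩ ∈ RCSegment ρ arep.1 brep.1 ∧
      ∀ hm : Moderate ρ (fun ε =>
          (∑ j ∈ Finset.range (n + 1), ((j.factorial : ℝ))⁻¹ *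
            iteratedFDeriv ℝ j (fn ε) (arep.1 ε) (fun _ => brep.1 ε - arep.1 ε)) +
          (((n + 1).factorial : ℝ))⁻¹ *
            iteratedFDeriv ℝ (n + 1) (fn ε) (ξ ε) (fun _ => brep.1 ε - arep.1 ε)),
        f (RC.mk brep) = RC.mk ⟨_, hm⟩) ∧
    (∀ hm : Moderate ρ (fun ε =>
        (∑ j ∈ Finset.range (n + 1), ((j.factorial : ℝ))⁻¹ *
          iteratedFDeriv ℝ j (fn ε) (arep.1 ε) (fun _ => brep.1 ε - arep.1 ε)) +
        ((n.factorial : ℝ))⁻¹ * ∫ t in (0 : ℝ)..1, (1 - t) ^ n *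
          iteratedFDeriv ℝ (n + 1) (fn ε) (arep.1 ε + t • (brep.1 ε - arep.1 ε))
            (fun _ => brep.1 ε - arep.1 ε)),
      f (RC.mk brep) = RC.mk ⟨_, hm⟩) := by
  classical
  -- `b` as a point of the segment (t ≡ 1), hence in `U`
  have hbnet : (fun ε => arep.1 ε + (1:ℝ) • (brep.1 ε - arep.1 ε)) = brep.1 := by
    funext ε; simp
  have hm1 : Moderate ρ (fun ε => arep.1 ε + (1:ℝ) • (brep.1 ε - arep.1 ε)) := by
    rw [hbnet]; exact brep.2
  have hbU : RC.mk brep ∈ U := by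
    apply hseg
    refine ⟨fun _ => (1:ℝ), fun ε _ => ⟨zero_le_one, le_rfl⟩, hm1, ?_⟩
    congr 1
    exact Subtype.ext hbnet
  have hmb : Moderate ρ (fun ε => fn ε (brep.1 ε)) := hdef.val_mod brep hbU
  have hval : f (RC.mk brep) = RC.mk ⟨_, hmb⟩ := heval brep hbU hmb
  -- eventually, the whole classical segment lies in `Ω ε`
  set Q : ℝ → Prop := fun ε => ∃ s, s ∈ Set.Icc (0:ℝ) 1 ∧
    arep.1 ε + s • (brep.1 ε - arep.1 ε) ∉ Ω ε with hQdef
  set t0 : ℝ → ℝ := fun ε => if h : Q ε then h.choose else 0 with ht0def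
  have ht0 : ∀ ε, II ε → t0 ε ∈ Set.Icc (0:ℝ) 1 := by
    intro ε _
    show (if h : Q ε then h.choose else 0) ∈ Set.Icc (0:ℝ) 1
    by_cases h : Q ε
    · rw [dif_pos h]; exact h.choose_spec.1
    · rw [dif_neg h]; exact ⟨le_rfl, zero_le_one⟩
  have hm0 : Moderate ρ (fun ε => arep.1 ε + t0 ε • (brep.1 ε - arep.1 ε)) :=
    moderate_segment hρ arep brep t0 ht0
  have hΩ := hdef.domain (hseg ⟨t0, ht0, hm0, rfl⟩) ⟨_, hm0⟩ rfl
  obtain ⟨ε₁, hε₁0, hε₁1, hΩ'⟩ := hΩ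
  have hPseg : ∀ ε, 0 < ε → ε ≤ ε₁ → ∀ s ∈ Set.Icc (0:ℝ) 1,
      arep.1 ε + s • (brep.1 ε - arep.1 ε) ∈ Ω ε := by
    intro ε hε0 hεle s hs
    by_contra hcon
    have hQ : Q ε := ⟨s, hs, hcon⟩
    have hmem : arep.1 ε + (if h : Q ε then h.choose else 0) • (brep.1 ε - arep.1 ε) ∈ Ω ε :=
      hΩ' ε hε0 hεle
    rw [dif_pos hQ] at hmem
    exact hQ.choose_spec.2 hmem
  -- per-ε Taylor data
  have hTay : ∀ ε, 0 < ε → ε ≤ ε₁ →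
      (∃ τ ∈ Set.Icc (0:ℝ) 1,
        fn ε (brep.1 ε) = (∑ j ∈ Finset.range (n + 1), ((j.factorial : ℝ))⁻¹ *
            iteratedFDeriv ℝ j (fn ε) (arep.1 ε) (fun _ => brep.1 ε - arep.1 ε))
          + (((n+1).factorial : ℝ))⁻¹ * iteratedFDeriv ℝ (n + 1) (fn ε)
              (arep.1 ε + τ • (brep.1 ε - arep.1 ε)) (fun _ => brep.1 ε - arep.1 ε)) ∧
      fn ε (brep.1 ε) = (∑ j ∈ Finset.range (n + 1), ((j.factorial : ℝ))⁻¹ *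
          iteratedFDeriv ℝ j (fn ε) (arep.1 ε) (fun _ => brep.1 ε - arep.1 ε))
        + ((n.factorial : ℝ))⁻¹ * ∫ t in (0:ℝ)..1, (1 - t) ^ n *
            iteratedFDeriv ℝ (n + 1) (fn ε) (arep.1 ε + t • (brep.1 ε - arep.1 ε))
              (fun _ => brep.1 ε - arep.1 ε) := by
    intro ε hε0 hεle
    have hII : II ε := ⟨hε0, le_trans hεle hε₁1⟩
    have hb : arep.1 ε + (brep.1 ε - arep.1 ε) = brep.1 ε := by abel
    have := taylor_eps (hdef.open' ε hII) ((hdef.smooth ε hII).of_le (by simp))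
      (hPseg ε hε0 hεle) n
    rw [hb] at this
    exact this
  constructor
  · -- Lagrange remainder
    set Q2 : ℝ → Prop := fun ε => ∃ τ, τ ∈ Set.Icc (0:ℝ) 1 ∧
      fn ε (brep.1 ε) = (∑ j ∈ Finset.range (n + 1), ((j.factorial : ℝ))⁻¹ *
          iteratedFDeriv ℝ j (fn ε) (arep.1 ε) (fun _ => brep.1 ε - arep.1 ε))
        + (((n+1).factorial : ℝ))⁻¹ * iteratedFDeriv ℝ (n + 1) (fn ε)
            (arep.1 ε + τ • (brep.1 ε - arep.1 ε)) (fun _ => brep.1 ε - arep.1 ε)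
      with hQ2def
    set tξ : ℝ → ℝ := fun ε => if h : Q2 ε then h.choose else 0 with htξdef
    have htξ : ∀ ε, II ε → tξ ε ∈ Set.Icc (0:ℝ) 1 := by
      intro ε _
      simp only [htξdef]
      by_cases h : Q2 ε
      · rw [dif_pos h]; exact h.choose_spec.1
      · rw [dif_neg h]; exact ⟨le_rfl, zero_le_one⟩
    have hmξ : Moderate ρ (fun ε => arep.1 ε + tξ ε • (brep.1 ε - arep.1 ε)) :=
      moderate_segment hρ arep brep tξ htξ
    refine ⟨fun ε => arep.1 ε + tξ ε • (brep.1 ε - arep.1 ε), hmξ,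
      ⟨tξ, htξ, hmξ, rfl⟩, ?_⟩
    intro hm
    rw [hval]
    apply Quot.sound
    intro m
    refine ⟨ε₁, hε₁0, hε₁1, fun ε hε0 hεle => ?_⟩
    have hII : II ε := ⟨hε0, le_trans hεle hε₁1⟩
    have hQ : Q2 ε := by
      obtain ⟨τ, hτ, heqτ⟩ := (hTay ε hε0 hεle).1
      exact ⟨τ, hτ, heqτ⟩
    have hsel : tξ ε = hQ.choose := by
      show (if h : Q2 ε then h.choose else 0) = hQ.choose
      rw [dif_pos hQ]
    show ‖fn ε (brep.1 ε) - ((∑ j ∈ Finset.range (n + 1), ((j.factorial : ℝ))⁻¹ *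
        iteratedFDeriv ℝ j (fn ε) (arep.1 ε) (fun _ => brep.1 ε - arep.1 ε))
      + (((n + 1).factorial : ℝ))⁻¹ * iteratedFDeriv ℝ (n + 1) (fn ε)
          (arep.1 ε + tξ ε • (brep.1 ε - arep.1 ε)) (fun _ => brep.1 ε - arep.1 ε))‖ ≤ ρ ε ^ m
    rw [hsel, ← hQ.choose_spec.2, sub_self, norm_zero]
    exact pow_nonneg (hρ.pos ε hII).le m
  · -- integral remainder
    intro hm
    rw [hval]
    apply Quot.sound
    intro m
    refine ⟨ε₁, hε₁0, hε₁1, fun ε hε0 hεle => ?_⟩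
    have hII : II ε := ⟨hε0, le_trans hεle hε₁1⟩
    have heq := (hTay ε hε0 hεle).2
    show ‖fn ε (brep.1 ε) - ((∑ j ∈ Finset.range (n + 1), ((j.factorial : ℝ))⁻¹ *
        iteratedFDeriv ℝ j (fn ε) (arep.1 ε) (fun _ => brep.1 ε - arep.1 ε))
      + ((n.factorial : ℝ))⁻¹ * ∫ t in (0:ℝ)..1, (1 - t) ^ n *
          iteratedFDeriv ℝ (n + 1) (fn ε) (arep.1 ε + t • (brep.1 ε - arep.1 ε))
            (fun _ => brep.1 ε - arep.1 ε))‖ ≤ ρ ε ^ m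
    rw [← heq, sub_self, norm_zero]
    exact pow_nonneg (hρ.pos ε hII).le m
end
end
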